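/- arXiv:1307.4884 — 6 statements merged into one kernel-verified Lean document; each statement's English description precedes it below -/
import Mathlib

section
/- For every ε > 0 and every Δ ≥ 1 there exists c > 0 such that for every η > 0 there exists n₀ with the following property: for all n ≥ n₀ and every connected graph G on vertex set {1,…,n} with maximum degree at most Δ, if R ~ G(n, ε/n) and G* = G ∪ R, then with probability at least 1 − η the graph G* contains a path with at least c·n edges. -/
open Real

/-- The Erdős–Rényi measure `G(n,p)`: the probability that the random graph lies in the
set `A` of graphs on `{1,…,n}`. -/
noncomputable def erProb (n : ℕ) (p : ℝ) (A : Set (SimpleGraph (Fin n))) : ℝ :=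
  ∑ R : SimpleGraph (Fin n),
    A.indicator (fun R => p ^ R.edgeSet.ncard * (1 - p) ^ (n.choose 2 - R.edgeSet.ncard)) R

/-!
Using the degree bound, cut `G` into `m ≈ n / (Δ k)` disjoint connected pieces of `k` to `Δ k`
vertices each. If any two disjoint families of `s = m / 4 + 1` pieces are joined by an edge of
`R`, depth-first search in the graph of pieces finds a path with at least `m - 2 s + 1` edges,
which lifts to a path of `G ∪ R` at least as long, and `m - 2 s + 1 ≥ n / (8 Δ k)`. Two such
families span at least `(s k)²` potential edges, so by a union bound over the at most `4 ^ m`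
pairs of families the condition fails with probability at most
`4 ^ m (1 - ε / n) ^ (s k)² ≤ e ^ (-m)` once `ε k ≥ 96 Δ`.
-/
open Finset Function SimpleGraph

section ErdosRenyi

variable {n : ℕ} {p : ℝ}

lemma erProb_mono (hp0 : 0 ≤ p) (hp1 : p ≤ 1) {A B : Set (SimpleGraph (Fin n))} (hAB : A ⊆ B) :
    erProb n p A ≤ erProb n p B :=
  sum_le_sum fun R _ => Set.indicator_le_indicator_of_subset hAB
    (fun _ => mul_nonneg (pow_nonneg hp0 _) (pow_nonneg (sub_nonneg.2 hp1) _)) R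

lemma erProb_biUnion_le (hp0 : 0 ≤ p) (hp1 : p ≤ 1) {ι : Type*} (Q : Finset ι)
    (E : ι → Set (SimpleGraph (Fin n))) :
    erProb n p (⋃ q ∈ Q, E q) ≤ ∑ q ∈ Q, erProb n p (E q) := by
  simp only [erProb]
  rw [sum_comm]
  refine sum_le_sum fun R _ => ?_
  have hw := mul_nonneg (pow_nonneg hp0 R.edgeSet.ncard)
    (pow_nonneg (sub_nonneg.2 hp1) (n.choose 2 - R.edgeSet.ncard))
  by_cases hR : R ∈ ⋃ q ∈ Q, E q
  · obtain ⟨q, hq, hRq⟩ := Set.mem_iUnion₂.1 hR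
    rw [Set.indicator_of_mem hR, ← Set.indicator_of_mem hRq (fun R : SimpleGraph (Fin n) =>
      p ^ R.edgeSet.ncard * (1 - p) ^ (n.choose 2 - R.edgeSet.ncard))]
    exact single_le_sum (f := fun q => (E q).indicator _ R)
      (fun q _ => Set.indicator_nonneg (fun _ _ => hw) R) hq
  · rw [Set.indicator_of_notMem hR]
    exact sum_nonneg fun q _ => Set.indicator_nonneg (fun _ _ => hw) R

lemma erProb_eq_sum_powerset (A : Set (SimpleGraph (Fin n))) [DecidablePred (· ∈ A)] :
    erProb n p A = ∑ s ∈ (⊤ : SimpleGraph (Fin n)).edgeFinset.powerset,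
      if fromEdgeSet (s : Set (Sym2 (Fin n))) ∈ A then
        p ^ #s * (1 - p) ^ (n.choose 2 - #s) else 0 := by
  have hedge : ∀ s ∈ (⊤ : SimpleGraph (Fin n)).edgeFinset.powerset,
      (Set.toFinite (fromEdgeSet (s : Set (Sym2 (Fin n)))).edgeSet).toFinset = s := fun s hs => by
    ext e
    simp only [Set.Finite.mem_toFinset, edgeSet_fromEdgeSet, Set.mem_sdiff, mem_coe,
      and_iff_left_iff_imp]
    intro he
    simpa [edgeSet_top] using mem_powerset.1 hs he
  refine sum_nbij' (fun R => (Set.toFinite R.edgeSet).toFinset) (fun s => fromEdgeSet s)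
    (fun R _ => ?_) (fun _ _ => mem_univ _) (fun R _ => ?_) hedge (fun R _ => ?_)
  · refine mem_powerset.2 fun e he => ?_
    rw [Set.Finite.mem_toFinset] at he
    exact mem_edgeFinset.2 (edgeSet_mono le_top he)
  · rw [Set.Finite.coe_toFinset, fromEdgeSet_edgeSet]
  · rw [Set.Finite.coe_toFinset, fromEdgeSet_edgeSet, Set.indicator_apply,
      Set.ncard_eq_toFinset_card R.edgeSet]

lemma card_edgeFinset_top_fin : #(⊤ : SimpleGraph (Fin n)).edgeFinset = n.choose 2 := by
  rw [card_edgeFinset_top_eq_card_choose_two, Fintype.card_fin]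

lemma erProb_univ : erProb n p Set.univ = 1 := by
  classical
  rw [erProb_eq_sum_powerset]
  simp only [Set.mem_univ, if_true]
  rw [← card_edgeFinset_top_fin, Finset.sum_pow_mul_eq_add_pow, add_sub_cancel, one_pow]

lemma erProb_compl (A : Set (SimpleGraph (Fin n))) : erProb n p Aᶜ = 1 - erProb n p A := by
  rw [← erProb_univ (n := n) (p := p), erProb, erProb, erProb, eq_sub_iff_add_eq,
    ← sum_add_distrib, Set.indicator_univ]
  exact sum_congr rfl fun R _ => Set.indicator_compl_add_self_apply A _ R

lemma erProb_forall_notMem_edgeSet {F : Finset (Sym2 (Fin n))}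
    (hF : F ⊆ (⊤ : SimpleGraph (Fin n)).edgeFinset) :
    erProb n p {R | ∀ e ∈ F, e ∉ R.edgeSet} = (1 - p) ^ #F := by
  classical
  set T := (⊤ : SimpleGraph (Fin n)).edgeFinset
  have hfilter : T.powerset.filter
      (fun s : Finset _ => fromEdgeSet (s : Set (Sym2 (Fin n))) ∈ {R | ∀ e ∈ F, e ∉ R.edgeSet})
      = (T \ F).powerset := by
    ext s
    simp only [mem_filter, mem_powerset, Set.mem_ofPred_eq, edgeSet_fromEdgeSet, Set.mem_sdiff,
      mem_coe, subset_sdiff]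
    refine and_congr_right fun _ => ?_
    rw [disjoint_right]
    refine forall₂_congr fun e he => ?_
    have hdiag : e ∉ Sym2.diagSet := by simpa [T, edgeSet_top] using hF he
    simp [hdiag]
  have hN : n.choose 2 = #F + #(T \ F) := by
    rw [card_sdiff_of_subset hF, Nat.add_sub_cancel' (card_le_card hF), card_edgeFinset_top_fin]
  calc erProb n p {R | ∀ e ∈ F, e ∉ R.edgeSet}
      = ∑ s ∈ (T \ F).powerset, p ^ #s * (1 - p) ^ (n.choose 2 - #s) := by
        rw [erProb_eq_sum_powerset, ← hfilter, sum_filter]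
        congr!
    _ = (1 - p) ^ #F * ∑ s ∈ (T \ F).powerset, p ^ #s * (1 - p) ^ (#(T \ F) - #s) := by
        rw [mul_sum]
        refine sum_congr rfl fun s hs => ?_
        rw [hN, Nat.add_sub_assoc (card_le_card (mem_powerset.1 hs)), pow_add]
        ring
    _ = (1 - p) ^ #F := by rw [Finset.sum_pow_mul_eq_add_pow, add_sub_cancel, one_pow, mul_one]

lemma erProb_forall_not_adj {A B : Finset (Fin n)} (hAB : Disjoint A B) :
    erProb n p {R | ∀ a ∈ A, ∀ b ∈ B, ¬ R.Adj a b} = (1 - p) ^ (#A * #B) := by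
  classical
  set F := (A ×ˢ B).image fun q => s(q.1, q.2)
  have hne : ∀ q ∈ A ×ˢ B, q.1 ≠ q.2 := fun q hq h =>
    disjoint_left.1 hAB (mem_product.1 hq).1 (h ▸ (mem_product.1 hq).2)
  have hinj : Set.InjOn (fun q : Fin n × Fin n => s(q.1, q.2)) (A ×ˢ B : Finset _) := by
    rintro ⟨a, b⟩ hq ⟨a', b'⟩ hq' h
    rcases Sym2.eq_iff.1 h with ⟨rfl, rfl⟩ | ⟨rfl, rfl⟩
    · rfl
    · exact absurd (mem_product.1 hq').1 (disjoint_right.1 hAB (mem_product.1 hq).2)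
  have hF : F ⊆ (⊤ : SimpleGraph (Fin n)).edgeFinset := by
    simp only [F, image_subset_iff, mem_edgeFinset, edgeSet_top]
    exact fun q hq => by simpa using hne q hq
  have hset : {R : SimpleGraph (Fin n) | ∀ a ∈ A, ∀ b ∈ B, ¬ R.Adj a b}
      = {R | ∀ e ∈ F, e ∉ R.edgeSet} := by
    ext R
    simp only [F, Set.mem_ofPred_eq, mem_image, mem_product, forall_exists_index, and_imp,
      Prod.forall]
    exact ⟨fun h _ a b ha hb hab => hab ▸ h a ha b hb, fun h a ha b hb => h _ a b ha hb rfl⟩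
  rw [hset, erProb_forall_notMem_edgeSet hF, card_image_of_injOn hinj, card_product]

end ErdosRenyi

namespace SimpleGraph

variable {V : Type*} {G G' : SimpleGraph V}

def ReachableIn (G : SimpleGraph V) (W : Finset V) (a b : V) : Prop :=
  ∃ p : G.Walk a b, ∀ x ∈ p.support, x ∈ W

/-- `W` is empty or induces a connected subgraph, i.e. `(G.induce W).Preconnected`. -/
def IsConnectedIn (G : SimpleGraph V) (W : Finset V) : Prop :=
  ∀ a ∈ W, ∀ b ∈ W, G.ReachableIn W a b

namespace ReachableIn

variable {W W' : Finset V} {a b c : V}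

lemma refl (ha : a ∈ W) : G.ReachableIn W a a := ⟨.nil, by simpa⟩

lemma symm (h : G.ReachableIn W a b) : G.ReachableIn W b a := by
  obtain ⟨p, hp⟩ := h
  exact ⟨p.reverse, fun x hx => hp x (by simpa using hx)⟩

lemma trans (h : G.ReachableIn W a b) (h' : G.ReachableIn W b c) : G.ReachableIn W a c := by
  obtain ⟨p, hp⟩ := h
  obtain ⟨q, hq⟩ := h'
  refine ⟨p.append q, fun x hx => ?_⟩
  rcases (Walk.mem_support_append_iff p q).1 hx with hx | hx
  exacts [hp x hx, hq x hx]

lemma of_adj (ha : a ∈ W) (hb : b ∈ W) (hab : G.Adj a b) : G.ReachableIn W a b :=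
  ⟨.cons hab .nil, by simp [ha, hb]⟩

lemma mono_set (h : G.ReachableIn W a b) (hW : W ⊆ W') : G.ReachableIn W' a b := by
  obtain ⟨p, hp⟩ := h
  exact ⟨p, fun x hx => hW (hp x hx)⟩

lemma mono (h : G.ReachableIn W a b) (hGG' : G ≤ G') : G'.ReachableIn W a b := by
  obtain ⟨p, hp⟩ := h
  exact ⟨p.mapLe hGG', fun x hx => hp x (by simpa using hx)⟩

lemma right_mem (h : G.ReachableIn W a b) : b ∈ W := by
  obtain ⟨p, hp⟩ := h
  exact hp b p.end_mem_support

lemma exists_isPath (h : G.ReachableIn W a b) :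
    ∃ p : G.Walk a b, p.IsPath ∧ ∀ x ∈ p.support, x ∈ W := by
  classical
  obtain ⟨p, hp⟩ := h
  exact ⟨p.toPath, p.toPath.2, fun x hx => hp x (p.support_toPath_subset_support hx)⟩

lemma exists_walk_forall_reachableIn (h : G.ReachableIn W a b) :
    ∃ p : G.Walk a b, ∀ x ∈ p.support, G.ReachableIn W a x := by
  classical
  obtain ⟨p, hp⟩ := h
  exact ⟨p, fun x hx =>
    ⟨p.takeUntil x hx, fun y hy => hp y (p.support_takeUntil_subset_support hx hy)⟩⟩

end ReachableIn

lemma Connected.isConnectedIn_univ [Fintype V] (hG : G.Connected) : G.IsConnectedIn univ :=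
  fun a _ b _ => ⟨(hG.preconnected a b).some, fun x _ => mem_univ x⟩

lemma IsConnectedIn.mono {W : Finset V} (h : G.IsConnectedIn W) (hGG' : G ≤ G') :
    G'.IsConnectedIn W :=
  fun a ha b hb => (h a ha b hb).mono hGG'

lemma isConnectedIn_of_forall_reachableIn {W : Finset V} {r : V}
    (h : ∀ u ∈ W, G.ReachableIn W u r) : G.IsConnectedIn W :=
  fun a ha b hb => (h a ha).trans (h b hb).symm

open scoped Classical in
noncomputable def componentIn (G : SimpleGraph V) (W : Finset V) (v : V) : Finset V :=
  W.filter (G.ReachableIn W v)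

section componentIn

variable {W : Finset V} {u v : V}

lemma mem_componentIn : u ∈ G.componentIn W v ↔ G.ReachableIn W v u := by
  classical
  simp only [componentIn, mem_filter]
  exact and_iff_right_of_imp ReachableIn.right_mem

lemma componentIn_subset : G.componentIn W v ⊆ W := fun _ hu => (mem_componentIn.1 hu).right_mem

lemma self_mem_componentIn (hv : v ∈ W) : v ∈ G.componentIn W v :=
  mem_componentIn.2 (.refl hv)

lemma componentIn_eq_of_mem (hu : u ∈ G.componentIn W v) :
    G.componentIn W u = G.componentIn W v := by
  have hvu := mem_componentIn.1 hu
  ext y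
  simp only [mem_componentIn]
  exact ⟨hvu.trans, hvu.symm.trans⟩

lemma isConnectedIn_componentIn : G.IsConnectedIn (G.componentIn W v) := by
  suffices h : ∀ u ∈ G.componentIn W v, G.ReachableIn (G.componentIn W v) v u from
    fun a ha b hb => (h a ha).symm.trans (h b hb)
  intro u hu
  obtain ⟨p, hp⟩ := (mem_componentIn.1 hu).exists_walk_forall_reachableIn
  exact ⟨p, fun x hx => mem_componentIn.2 (hp x hx)⟩

end componentIn

section Split

variable [DecidableEq V] {W : Finset V} {r u : V}

/-- Take the vertex preceding `r` on a path from `u` to `r`. -/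
lemma ReachableIn.exists_adj_reachableIn_erase (h : G.ReachableIn W u r) (hu : u ≠ r) :
    ∃ x, G.Adj r x ∧ G.ReachableIn (W.erase r) u x := by
  obtain ⟨p, hp, hpW⟩ := h.symm.exists_isPath
  cases p with
  | nil => exact absurd rfl hu
  | cons hrx q =>
    refine ⟨_, hrx, q.reverse, fun y hy => ?_⟩
    rw [Walk.support_reverse, List.mem_reverse] at hy
    refine mem_erase.2 ⟨?_, hpW y (by simp [hy])⟩
    rintro rfl
    exact ((Walk.cons_isPath_iff _ _).1 hp).2 hy

lemma IsConnectedIn.exists_adj_mem_componentIn_erase (hW : G.IsConnectedIn W) (hr : r ∈ W)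
    (hu : u ∈ W.erase r) : ∃ x ∈ W.erase r, G.Adj r x ∧ u ∈ G.componentIn (W.erase r) x := by
  obtain ⟨hur, huW⟩ := mem_erase.1 hu
  obtain ⟨x, hrx, hux⟩ := (hW u huW r hr).exists_adj_reachableIn_erase hur
  exact ⟨x, hux.right_mem, hrx, mem_componentIn.2 hux.symm⟩

/-- Every component of `W - r` contains a neighbour of `r`, so there are at most `Δ` of them. -/
lemma IsConnectedIn.exists_large_componentIn_erase [G.LocallyFinite] {Δ k : ℕ}
    (hdeg : ∀ v, G.degree v ≤ Δ) (hW : G.IsConnectedIn W) (hr : r ∈ W)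
    (hcard : Δ * (k - 1) < #(W.erase r)) :
    ∃ x ∈ W.erase r, G.Adj r x ∧ k ≤ #(G.componentIn (W.erase r) x) := by
  set N := W.erase r ∩ G.neighborFinset r
  by_contra! hsmall
  have hcover : W.erase r ⊆ N.biUnion (G.componentIn (W.erase r)) := fun u hu => by
    obtain ⟨x, hx, hrx, hux⟩ := hW.exists_adj_mem_componentIn_erase hr hu
    exact mem_biUnion.2 ⟨x, mem_inter.2 ⟨hx, (mem_neighborFinset G r x).2 hrx⟩, hux⟩
  have hN : #N ≤ Δ := (card_le_card inter_subset_right).trans (hdeg r)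
  have := calc #(W.erase r)
      ≤ ∑ x ∈ N, #(G.componentIn (W.erase r) x) := (card_le_card hcover).trans card_biUnion_le
    _ ≤ #N • (k - 1) := sum_le_card_nsmul _ _ _ fun x hx => by
        have := hsmall x (mem_inter.1 hx).1 ((mem_neighborFinset G r x).1 (mem_inter.1 hx).2)
        omega
    _ ≤ Δ * (k - 1) := Nat.mul_le_mul_right _ hN
  omega

/-- Every other component of `W - r` contains a neighbour of `r`. -/
lemma IsConnectedIn.reachableIn_sdiff_componentIn (hW : G.IsConnectedIn W) (hr : r ∈ W) (x : V) :
    ∀ u ∈ W \ G.componentIn (W.erase r) x, G.ReachableIn (W \ G.componentIn (W.erase r) x) u r := by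
  intro u hu
  have hrC : r ∉ G.componentIn (W.erase r) x := fun h => by simpa using componentIn_subset h
  obtain ⟨huW, huC⟩ := mem_sdiff.1 hu
  obtain rfl | hur := eq_or_ne u r
  · exact .refl (mem_sdiff.2 ⟨hr, hrC⟩)
  obtain ⟨y, hy, hry, huy⟩ := hW.exists_adj_mem_componentIn_erase hr (mem_erase.2 ⟨hur, huW⟩)
  have hsub : G.componentIn (W.erase r) y ⊆ W \ G.componentIn (W.erase r) x := fun z hz => by
    refine mem_sdiff.2 ⟨mem_of_mem_erase (componentIn_subset hz), fun hzx => huC ?_⟩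
    rwa [← componentIn_eq_of_mem hzx, componentIn_eq_of_mem hz]
  have hyC := self_mem_componentIn (G := G) hy
  exact ((isConnectedIn_componentIn u huy y hyC).mono_set hsub).trans
    (.of_adj (hsub hyC) (mem_sdiff.2 ⟨hr, hrC⟩) hry.symm)

/-- Some component `C` of `W - r` has at least `k` vertices; if it has more than `Δ k`, recurse
into `C` rooted at a neighbour of `r`. -/
theorem IsConnectedIn.exists_split [G.LocallyFinite] {Δ k : ℕ} (hdeg : ∀ v, G.degree v ≤ Δ)
    (hΔ : 0 < Δ) (hk : 0 < k) (hW : G.IsConnectedIn W) (hr : r ∈ W) (hcard : Δ * k < #W) :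
    ∃ S ⊆ W.erase r, G.IsConnectedIn S ∧ k ≤ #S ∧ #S ≤ Δ * k ∧ G.IsConnectedIn (W \ S) := by
  induction W using Finset.strongInduction generalizing r with
  | H W ih =>
  have hlt : Δ * (k - 1) < #(W.erase r) := by
    rw [card_erase_of_mem hr, Nat.mul_sub_one]
    have := Nat.le_mul_of_pos_right Δ hk
    omega
  obtain ⟨x, hx, hrx, hbig⟩ := hW.exists_large_componentIn_erase hdeg hr hlt
  set C := G.componentIn (W.erase r) x
  have hCW : C ⊆ W.erase r := componentIn_subset
  have hrest := hW.reachableIn_sdiff_componentIn hr x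
  by_cases hsmall : #C ≤ Δ * k
  · exact ⟨C, hCW, isConnectedIn_componentIn, hbig, hsmall,
      isConnectedIn_of_forall_reachableIn hrest⟩
  obtain ⟨S, hSC, hS, hkS, hSΔ, hCS⟩ := ih C (hCW.trans_ssubset (erase_ssubset hr))
    isConnectedIn_componentIn (self_mem_componentIn hx) (not_le.1 hsmall)
  have hSC' : S ⊆ C := hSC.trans (erase_subset _ _)
  refine ⟨S, hSC'.trans hCW, hS, hkS, hSΔ, isConnectedIn_of_forall_reachableIn (r := r)
    fun u hu => ?_⟩
  obtain ⟨huW, huS⟩ := mem_sdiff.1 hu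
  by_cases huC : u ∈ C
  · have hxCS : x ∈ C \ S := mem_sdiff.2 ⟨self_mem_componentIn hx, fun h => by simpa using hSC h⟩
    have hsub : C \ S ⊆ W \ S := sdiff_subset_sdiff (hCW.trans (erase_subset _ _)) le_rfl
    exact ((hCS u (mem_sdiff.2 ⟨huC, huS⟩) x hxCS).mono_set hsub).trans
      (.of_adj (hsub hxCS) (mem_sdiff.2 ⟨hr, fun h => by simpa using hCW (hSC' h)⟩) hrx.symm)
  · exact (hrest u (mem_sdiff.2 ⟨huW, huC⟩)).mono_set (sdiff_subset_sdiff le_rfl hSC')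

theorem IsConnectedIn.exists_partition [G.LocallyFinite] {Δ k : ℕ} (hdeg : ∀ v, G.degree v ≤ Δ)
    (hΔ : 0 < Δ) (hk : 0 < k) (hW : G.IsConnectedIn W) :
    ∃ L : List (Finset V), L.Pairwise Disjoint ∧ (∀ S ∈ L, S ⊆ W ∧ G.IsConnectedIn S ∧ k ≤ #S) ∧
      #W ≤ Δ * k * (L.length + 1) := by
  induction W using Finset.strongInduction with
  | H W ih =>
  by_cases hsmall : #W ≤ Δ * k
  · exact ⟨[], .nil, by simp, by simpa⟩
  obtain ⟨r, hr⟩ := card_pos.1 (by omega : 0 < #W)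
  obtain ⟨S, hSW, hS, hkS, hSΔ, hWS⟩ := hW.exists_split hdeg hΔ hk hr (not_le.1 hsmall)
  have hSW' : S ⊆ W := hSW.trans (erase_subset _ _)
  obtain ⟨L, hL, hLW, hcard⟩ := ih (W \ S) (sdiff_ssubset hSW' (card_pos.1 (by omega))) hWS
  refine ⟨S :: L, .cons (fun T hT => disjoint_of_subset_right (hLW T hT).1 disjoint_sdiff) hL,
    fun T hT => ?_, ?_⟩
  · rcases List.mem_cons.1 hT with rfl | hT
    · exact ⟨hSW', hS, hkS⟩
    · exact ⟨(hLW T hT).1.trans sdiff_subset, (hLW T hT).2⟩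
  · rw [← card_sdiff_add_card_eq_card hSW', List.length_cons]
    linarith

end Split

section DFS

variable {W : Type*} (H : SimpleGraph W)

/-- A state of depth-first search in `H`: `X` is the set of finished vertices and `l` is the
stack, a path of `H` listed from its top; every neighbour of a finished vertex has been visited. -/
def IsDFSState (X : Finset W) (l : List W) : Prop :=
  l.Nodup ∧ (∀ v ∈ l, v ∉ X) ∧ l.IsChain H.Adj ∧ ∀ x ∈ X, ∀ u, H.Adj x u → u ∈ X ∨ u ∈ l

variable {H} [Fintype W]

/-- One step of depth-first search: push an unvisited neighbour of the top of the stack, or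
else pop the top and mark it finished. -/
lemma IsDFSState.exists_step {X : Finset W} {l : List W} (h : H.IsDFSState X l)
    (hlt : 2 * #X + l.length < 2 * Fintype.card W) :
    ∃ X' l', H.IsDFSState X' l' ∧ 2 * #X' + l'.length = 2 * #X + l.length + 1 := by
  classical
  obtain ⟨hnd, hdisj, hchain, hclosed⟩ := h
  cases l with
  | nil =>
    obtain ⟨u, hu⟩ : ∃ u, u ∉ X := by
      by_contra! hX
      rw [eq_univ_of_forall hX, card_univ, List.length_nil] at hlt
      omega
    refine ⟨X, [u], ⟨List.nodup_singleton u, by simpa, .singleton u, fun x hx w hxw => ?_⟩,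
      by simp⟩
    simpa using Or.inl (hclosed x hx w hxw)
  | cons v l =>
    by_cases hnew : ∃ u, H.Adj v u ∧ u ∉ X ∧ u ∉ v :: l
    · obtain ⟨u, hvu, huX, hul⟩ := hnew
      refine ⟨X, u :: v :: l, ⟨hnd.cons hul, ?_, hchain.cons_cons hvu.symm, ?_⟩, by simp; ring⟩
      · simpa [huX] using hdisj
      · exact fun x hx w hxw => (hclosed x hx w hxw).imp_right (List.mem_cons_of_mem u)
    · push Not at hnew
      have hvX : v ∉ X := hdisj v List.mem_cons_self
      have hvl : v ∉ l := (List.nodup_cons.1 hnd).1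
      refine ⟨insert v X, l, ⟨hnd.of_cons, fun w hw => ?_, hchain.tail, fun x hx w hxw => ?_⟩, ?_⟩
      · simp only [mem_insert, not_or]
        exact ⟨fun h => hvl (h ▸ hw), hdisj w (List.mem_cons_of_mem v hw)⟩
      · have hw : w ∈ X ∨ w ∈ v :: l := by
          rcases mem_insert.1 hx with rfl | hx
          · exact or_iff_not_imp_left.2 (hnew w hxw)
          · exact hclosed x hx w hxw
        simp only [List.mem_cons, mem_insert] at hw ⊢
        tauto
      · rw [card_insert_of_notMem hvX, List.length_cons]
        ring

lemma exists_isDFSState {t : ℕ} (ht : t ≤ 2 * Fintype.card W) :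
    ∃ X l, H.IsDFSState X l ∧ 2 * #X + l.length = t := by
  induction t with
  | zero => exact ⟨∅, [], ⟨.nil, by simp, .nil, by simp⟩, rfl⟩
  | succ t ih =>
    obtain ⟨X, l, h, rfl⟩ := ih (by omega)
    exact h.exists_step (by omega)

/-- Depth-first search for long paths: stop when as many vertices are finished as are
unvisited. There are no edges between these two sets, so fewer than `s` are finished, and the
stack is the path. -/
theorem exists_isPath_of_forall_disjoint_adj [Nonempty W] {s : ℕ}
    (hadj : ∀ A B : Finset W, #A = s → #B = s → Disjoint A B → ∃ a ∈ A, ∃ b ∈ B, H.Adj a b) :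
    ∃ (u v : W) (p : H.Walk u v), p.IsPath ∧ Fintype.card W + 1 ≤ p.length + 2 * s := by
  classical
  obtain ⟨X, l, ⟨hnd, hdisj, hchain, hclosed⟩, hpot⟩ :=
    exists_isDFSState (H := H) (t := Fintype.card W) (by omega)
  set T := univ \ (X ∪ l.toFinset)
  have hT : #T = #X := by
    have hXl : Disjoint X l.toFinset :=
      disjoint_right.2 fun v hv => hdisj v (List.mem_toFinset.1 hv)
    rw [card_univ_sdiff, card_union_of_disjoint hXl, List.toFinset_card_of_nodup hnd]
    omega
  have hX : #X < s := by
    by_contra! hs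
    obtain ⟨A, hAX, hA⟩ := exists_subset_card_eq hs
    obtain ⟨B, hBT, hB⟩ := exists_subset_card_eq (hT ▸ hs)
    have hXT : Disjoint X T := disjoint_sdiff.mono_left subset_union_left
    obtain ⟨a, ha, b, hb, hab⟩ := hadj A B hA hB (hXT.mono hAX hBT)
    have hbT := hBT hb
    simp only [T, mem_sdiff, mem_univ, mem_union, List.mem_toFinset, true_and] at hbT
    exact hbT (hclosed a (hAX ha) b hab)
  cases l with
  | nil => exact ⟨Classical.arbitrary W, _, .nil, .nil, by simp at hpot; omega⟩
  | cons v l =>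
    refine ⟨_, _, .ofSupport (v :: l) (List.cons_ne_nil _ _) hchain, ?_, ?_⟩
    · rw [Walk.isPath_def, Walk.support_ofSupport]
      exact hnd
    · rw [Walk.length_ofSupport]
      simp only [List.length_cons] at hpot ⊢
      omega

end DFS

section Pieces

variable {ι : Type*} {P : ι → Finset V}

def pieceGraph (G : SimpleGraph V) (P : ι → Finset V) : SimpleGraph ι :=
  fromRel fun i j => ∃ x ∈ P i, ∃ y ∈ P j, G.Adj x y

def JoinsPieces (G : SimpleGraph V) (P : ι → Finset V) (s : ℕ) : Prop :=
  ∀ A B : Finset ι, #A = s → #B = s → Disjoint A B →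
    ∃ i ∈ A, ∃ j ∈ B, ∃ x ∈ P i, ∃ y ∈ P j, G.Adj x y

lemma JoinsPieces.mono {s : ℕ} (h : G.JoinsPieces P s) (hGG' : G ≤ G') : G'.JoinsPieces P s :=
  fun A B hA hB hAB => by
    obtain ⟨i, hi, j, hj, x, hx, y, hy, hxy⟩ := h A B hA hB hAB
    exact ⟨i, hi, j, hj, x, hx, y, hy, hGG' hxy⟩

lemma pieceGraph_adj {i j : ι} :
    (G.pieceGraph P).Adj i j ↔ i ≠ j ∧ ∃ x ∈ P i, ∃ y ∈ P j, G.Adj x y := by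
  rw [pieceGraph, fromRel_adj]
  refine and_congr_right fun _ => ⟨?_, Or.inl⟩
  rintro (h | ⟨x, hx, y, hy, hxy⟩)
  exacts [h, ⟨y, hy, x, hx, hxy.symm⟩]

/-- Join the edges between consecutive pieces by paths inside the pieces. -/
lemma exists_isPath_of_isPath_pieceGraph (hdisj : Pairwise (Disjoint on P))
    (hconn : ∀ i, G.IsConnectedIn (P i)) {i j : ι} (p : (G.pieceGraph P).Walk i j) (hp : p.IsPath)
    {b : V} (hb : b ∈ P i) :
    ∃ (u : V) (q : G.Walk b u), q.IsPath ∧ p.length ≤ q.length ∧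
      ∀ z ∈ q.support, ∃ t ∈ p.support, z ∈ P t := by
  induction p generalizing b with
  | nil => exact ⟨b, .nil, .nil, le_rfl, by simpa⟩
  | @cons i i' j hii' p ih =>
    obtain ⟨-, x, hx, y, hy, hxy⟩ := pieceGraph_adj.1 hii'
    obtain ⟨hp', hip⟩ := (Walk.cons_isPath_iff _ _).1 hp
    obtain ⟨u, q, hq, hlen, hsupp⟩ := ih hp' hy
    obtain ⟨r, hr, hrP⟩ := (hconn i b hb x hx).exists_isPath
    have hqP : ∀ z ∈ q.support, z ∉ P i := fun z hz hzi => by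
      obtain ⟨t, ht, hzt⟩ := hsupp z hz
      exact Finset.disjoint_left.1 (hdisj (i := t) (j := i) fun h => hip (h ▸ ht)) hzt hzi
    refine ⟨u, r.append (.cons hxy q), ?_, ?_, fun z hz => ?_⟩
    · rw [Walk.isPath_def, Walk.support_append, Walk.support_cons, List.tail_cons,
        List.nodup_append]
      exact ⟨hr.support_nodup, hq.support_nodup, fun z hz z' hz' h =>
        hqP z' hz' (h ▸ hrP z hz)⟩
    · simp only [Walk.length_append, Walk.length_cons]
      omega
    · rw [Walk.support_append, Walk.support_cons, List.tail_cons, List.mem_append] at hz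
      rcases hz with hz | hz
      · exact ⟨i, Walk.start_mem_support _, hrP z hz⟩
      · obtain ⟨t, ht, hzt⟩ := hsupp z hz
        exact ⟨t, List.mem_cons_of_mem _ ht, hzt⟩

theorem exists_isPath_of_pieces [Fintype ι] [Nonempty ι] (hdisj : Pairwise (Disjoint on P))
    (hconn : ∀ i, G.IsConnectedIn (P i)) (hne : ∀ i, (P i).Nonempty) {s : ℕ}
    (hjoin : G.JoinsPieces P s) :
    ∃ (u v : V) (q : G.Walk u v), q.IsPath ∧ Fintype.card ι + 1 ≤ q.length + 2 * s := by
  obtain ⟨i, j, p, hp, hlen⟩ := (G.pieceGraph P).exists_isPath_of_forall_disjoint_adj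
    fun A B hA hB hAB => by
      obtain ⟨i, hi, j, hj, hij⟩ := hjoin A B hA hB hAB
      exact ⟨i, hi, j, hj,
        pieceGraph_adj.2 ⟨fun h => Finset.disjoint_left.1 hAB hi (h ▸ hj), hij⟩⟩
  obtain ⟨b, hb⟩ := hne i
  obtain ⟨u, q, hq, hpq, -⟩ := exists_isPath_of_isPath_pieceGraph hdisj hconn p hp hb
  exact ⟨b, u, q, hq, by omega⟩

end Pieces

end SimpleGraph

lemma Finset.card_mul_le_card_biUnion {ι α : Type*} [DecidableEq α] {P : ι → Finset α}
    (hdisj : Pairwise (Disjoint on P)) {k : ℕ} (hk : ∀ i, k ≤ #(P i)) (A : Finset ι) :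
    #A * k ≤ #(A.biUnion P) := by
  rw [card_biUnion fun i _ j _ hij => hdisj hij]
  exact card_nsmul_le_sum A _ k fun i _ => hk i

section RandomEdgesBetweenPieces

variable {n : ℕ} {p : ℝ} {ι : Type*} [Fintype ι] {P : ι → Finset (Fin n)}

lemma erProb_not_joinsPieces_le (hp0 : 0 ≤ p) (hp1 : p ≤ 1) (hdisj : Pairwise (Disjoint on P))
    {k : ℕ} (hk : ∀ i, k ≤ #(P i)) (s : ℕ) :
    erProb n p {R | ¬ R.JoinsPieces P s} ≤ 4 ^ Fintype.card ι * (1 - p) ^ ((s * k) ^ 2) := by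
  classical
  set Q := (univ : Finset (Finset ι × Finset ι)).filter
    fun q => #q.1 = s ∧ #q.2 = s ∧ Disjoint q.1 q.2
  set E : Finset ι × Finset ι → Set (SimpleGraph (Fin n)) :=
    fun q => {R | ∀ x ∈ q.1.biUnion P, ∀ y ∈ q.2.biUnion P, ¬ R.Adj x y}
  have hsub : {R : SimpleGraph (Fin n) | ¬ R.JoinsPieces P s} ⊆ ⋃ q ∈ Q, E q := by
    intro R hR
    simp only [JoinsPieces, Set.mem_ofPred_eq] at hR
    push Not at hR
    obtain ⟨A, B, hA, hB, hAB, hR⟩ := hR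
    refine Set.mem_iUnion₂.2 ⟨(A, B), mem_filter.2 ⟨mem_univ _, hA, hB, hAB⟩, fun x hx y hy => ?_⟩
    obtain ⟨i, hi, hxi⟩ := mem_biUnion.1 hx
    obtain ⟨j, hj, hyj⟩ := mem_biUnion.1 hy
    exact hR i hi j hj x hxi y hyj
  have hE : ∀ q ∈ Q, erProb n p (E q) ≤ (1 - p) ^ ((s * k) ^ 2) := fun q hq => by
    obtain ⟨hA, hB, hAB⟩ := (mem_filter.1 hq).2
    have hdisjAB : Disjoint (q.1.biUnion P) (q.2.biUnion P) := by
      refine (disjoint_biUnion_left _ _ _).2 fun i hi =>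
        (disjoint_biUnion_right _ _ _).2 fun j hj => ?_
      exact hdisj fun h => Finset.disjoint_left.1 hAB hi (h ▸ hj)
    rw [erProb_forall_not_adj hdisjAB, sq]
    refine pow_le_pow_of_le_one (sub_nonneg.2 hp1) (sub_le_self _ hp0) (Nat.mul_le_mul ?_ ?_)
    · simpa [hA] using card_mul_le_card_biUnion hdisj hk q.1
    · simpa [hB] using card_mul_le_card_biUnion hdisj hk q.2
  have hQ : (#Q : ℝ) ≤ 4 ^ Fintype.card ι := by
    have := card_le_univ Q
    rw [Fintype.card_prod, Fintype.card_finset, ← mul_pow] at this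
    exact_mod_cast this
  calc _ ≤ erProb n p (⋃ q ∈ Q, E q) := erProb_mono hp0 hp1 hsub
    _ ≤ ∑ q ∈ Q, erProb n p (E q) := erProb_biUnion_le hp0 hp1 Q E
    _ ≤ #Q • (1 - p) ^ ((s * k) ^ 2) := sum_le_card_nsmul _ _ _ hE
    _ ≤ 4 ^ Fintype.card ι * (1 - p) ^ ((s * k) ^ 2) := by
      rw [nsmul_eq_mul]
      exact mul_le_mul_of_nonneg_right hQ (pow_nonneg (sub_nonneg.2 hp1) _)

theorem le_erProb_exists_long_path [Nonempty ι] (hp0 : 0 ≤ p) (hp1 : p ≤ 1)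
    {G : SimpleGraph (Fin n)} (hdisj : Pairwise (Disjoint on P))
    (hconn : ∀ i, G.IsConnectedIn (P i)) {k : ℕ} (hk : 0 < k) (hkP : ∀ i, k ≤ #(P i)) (s : ℕ) :
    1 - 4 ^ Fintype.card ι * (1 - p) ^ ((s * k) ^ 2) ≤ erProb n p {R | ∃ (u v : Fin n)
      (q : (G ⊔ R).Walk u v), q.IsPath ∧ Fintype.card ι + 1 ≤ q.length + 2 * s} := by
  have hgood : {R | ¬ R.JoinsPieces P s}ᶜ ⊆ {R | ∃ (u v : Fin n) (q : (G ⊔ R).Walk u v),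
      q.IsPath ∧ Fintype.card ι + 1 ≤ q.length + 2 * s} := fun R hR =>
    exists_isPath_of_pieces hdisj (fun i => (hconn i).mono le_sup_left)
      (fun i => card_pos.1 (hk.trans_le (hkP i))) ((not_not.1 hR).mono le_sup_right)
  calc _ ≤ 1 - erProb n p {R | ¬ R.JoinsPieces P s} := by
        linarith [erProb_not_joinsPieces_le hp0 hp1 hdisj hkP s]
    _ = erProb n p {R | ¬ R.JoinsPieces P s}ᶜ := (erProb_compl _).symm
    _ ≤ _ := erProb_mono hp0 hp1 hgood

end RandomEdgesBetweenPieces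

lemma four_pow_mul_one_sub_pow_le_exp {m N : ℕ} {p : ℝ} (hp1 : p ≤ 1) (h : 3 * m ≤ p * N) :
    4 ^ m * (1 - p) ^ N ≤ Real.exp (-m) := by
  have h4 : (4 : ℝ) ≤ Real.exp 2 := by
    have := Real.add_one_le_exp 1
    rw [show (2 : ℝ) = 1 + 1 by norm_num, Real.exp_add]
    nlinarith
  calc (4 : ℝ) ^ m * (1 - p) ^ N ≤ Real.exp 2 ^ m * Real.exp (-p) ^ N := by
        have h1p := sub_nonneg.2 hp1
        gcongr
        exact Real.one_sub_le_exp_neg p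
    _ = Real.exp (2 * m - p * N) := by
        rw [← Real.exp_nat_mul, ← Real.exp_nat_mul, ← Real.exp_add]
        ring_nf
    _ ≤ Real.exp (-m) := Real.exp_le_exp.2 (by linarith)

lemma three_mul_le_div_mul_sq {ε : ℝ} {Δ k m n : ℕ} (hε : 0 < ε) (hεk : 96 * Δ ≤ ε * k)
    (hn : 0 < n) (hnm : n ≤ Δ * k * (m + 1)) (hm : 1 ≤ m) :
    3 * (m : ℝ) ≤ ε / n * (((m / 4 + 1) * k) ^ 2 : ℕ) := by
  set s : ℕ := m / 4 + 1
  have hms : (m : ℝ) * k ≤ 4 * (s * k) := by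
    have := Nat.mul_le_mul_right k (by omega : m ≤ 4 * s)
    exact_mod_cast (by linarith : m * k ≤ 4 * (s * k))
  have hn2 : (n : ℝ) ≤ 2 * Δ * k * m := by
    have : n ≤ 2 * Δ * k * m := hnm.trans (by nlinarith)
    exact_mod_cast this
  rw [div_mul_eq_mul_div, le_div_iff₀ (by exact_mod_cast hn)]
  push_cast
  calc 3 * (m : ℝ) * n ≤ 3 * m * (2 * Δ * k * m) := by gcongr
    _ = 96 * Δ * (m ^ 2 * k) / 16 := by ring
    _ ≤ ε * k * (m ^ 2 * k) / 16 := by gcongr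
    _ = ε * (m * k) ^ 2 / 16 := by ring
    _ ≤ ε * (4 * (s * k)) ^ 2 / 16 := by gcongr
    _ = ε * (s * k) ^ 2 := by ring

lemma div_mul_le_of_le_mul_succ {Δ k m n ℓ : ℕ} (hΔk : 0 < Δ * k) (hn : n ≤ Δ * k * (m + 1))
    (hm : 3 ≤ m) (hℓ : m + 1 ≤ ℓ + 2 * (m / 4 + 1)) : 1 / (8 * Δ * k : ℝ) * n ≤ ℓ := by
  have h8 : n ≤ 8 * Δ * k * ℓ := by
    have := hn.trans (Nat.mul_le_mul_left (Δ * k) (by omega : m + 1 ≤ 8 * ℓ))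
    linarith
  have hpos : (0 : ℝ) < 8 * Δ * k := by
    rw [mul_assoc]
    exact_mod_cast (by omega : 0 < 8 * (Δ * k))
  rw [one_div_mul_eq_div, div_le_iff₀ hpos, mul_comm]
  exact_mod_cast h8

theorem le_erProb_exists_long_path_of_connected {ε : ℝ} (hε : 0 < ε) {Δ k M n : ℕ} (hΔ : 0 < Δ)
    (hk : 0 < k) (hεk : 96 * Δ ≤ ε * k) (hM : 3 ≤ M) (hn : Δ * k * (M + 1) ≤ n) (hεn : ε ≤ n)
    {G : SimpleGraph (Fin n)} [G.LocallyFinite] (hG : G.Connected) (hdeg : ∀ v, G.degree v ≤ Δ) :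
    1 - Real.exp (-M) ≤ erProb n (ε / n) {R | ∃ (u v : Fin n) (p : (G ⊔ R).Walk u v),
      p.IsPath ∧ 1 / (8 * Δ * k) * n ≤ (p.length : ℝ)} := by
  obtain ⟨L, hLdisj, hL, hcard⟩ := hG.isConnectedIn_univ.exists_partition hdeg hΔ hk
  set m := L.length
  rw [card_univ, Fintype.card_fin] at hcard
  have hΔk : 0 < Δ * k := Nat.mul_pos hΔ hk
  have hMm : M ≤ m := by
    have := Nat.le_of_mul_le_mul_left (hn.trans hcard) hΔk
    omega
  have hn0 : 0 < n := by nlinarith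
  have hp0 : 0 ≤ ε / n := by positivity
  have hp1 : ε / n ≤ 1 := div_le_one_of_le₀ hεn n.cast_nonneg
  have : Nonempty (Fin m) := ⟨⟨0, by omega⟩⟩
  have hPdisj : Pairwise (Disjoint on L.get) := fun i j hij =>
    (lt_or_gt_of_ne hij).elim hLdisj.rel_get_of_lt fun h => (hLdisj.rel_get_of_lt h).symm
  refine le_trans ?_ ((le_erProb_exists_long_path hp0 hp1 hPdisj
    (fun i => (hL _ (L.get_mem i)).2.1) hk (fun i => (hL _ (L.get_mem i)).2.2) (m / 4 + 1)).trans
    (erProb_mono hp0 hp1 fun R ⟨u, v, q, hq, hlen⟩ => ⟨u, v, q, hq, ?_⟩))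
  · have := four_pow_mul_one_sub_pow_le_exp hp1
      (three_mul_le_div_mul_sq hε hεk hn0 hcard (by omega))
    have := Real.exp_le_exp.2 (neg_le_neg (Nat.cast_le.2 hMm) : -(m : ℝ) ≤ -M)
    rw [Fintype.card_fin]
    linarith
  · rw [Fintype.card_fin] at hlen
    exact div_mul_le_of_le_mul_succ hΔk hcard (by omega) hlen

/-- Theorem 6 (long paths in randomly perturbed connected bounded-degree graphs):
a.a.s. `G ∪ R` contains a path with at least `c·n` edges. -/
theorem long_path_in_perturbed_connected :
    ∀ ε : ℝ, 0 < ε → ∀ Δ : ℕ, 1 ≤ Δ → ∃ c : ℝ, 0 < c ∧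
      ∀ η : ℝ, 0 < η → ∃ n₀ : ℕ, ∀ n : ℕ, n₀ ≤ n →
        ∀ G : SimpleGraph (Fin n), G.Connected →
          (∀ v : Fin n, (G.neighborSet v).ncard ≤ Δ) →
          1 - η ≤ erProb n (ε / n)
            {R | ∃ (u v : Fin n) (p : (G ⊔ R).Walk u v),
                p.IsPath ∧ c * n ≤ (p.length : ℝ)} := by
  classical
  intro ε hε Δ hΔ
  obtain ⟨k, hk⟩ := exists_nat_gt (96 * Δ / ε)
  have hk0 : 0 < k := Nat.cast_pos.1 ((by positivity : 0 ≤ 96 * (Δ : ℝ) / ε).trans_lt hk)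
  rw [div_lt_iff₀ hε] at hk
  refine ⟨1 / (8 * Δ * k), by positivity, fun η hη => ?_⟩
  obtain ⟨M, hM, hMη⟩ := ((Filter.eventually_ge_atTop 3).and
    ((Real.tendsto_exp_neg_atTop_nhds_zero.comp tendsto_natCast_atTop_atTop).eventually
      (ge_mem_nhds hη))).exists
  refine ⟨Δ * k * (M + 1) + ⌈ε⌉₊, fun n hn G hG hdeg => (sub_le_sub_left hMη 1).trans
    (le_erProb_exists_long_path_of_connected hε hΔ hk0 (by linarith) hM (le_self_add.trans hn)
      ((Nat.le_ceil ε).trans (by exact_mod_cast le_add_self.trans hn)) hG fun v => ?_)⟩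
  rw [← card_neighborSet_eq_degree, ← Nat.card_eq_fintype_card, Nat.card_coe_set_eq]
  exact hdeg v
end

section
/- Let a ≥ 1 and b ≥ 0 be integers, let G be the star K_{1,a+b−1} with center vertex v (v joined to a+b−1 leaves, no other edges), and let 𝒞(v,a,b) be the collection of vertex sets A such that v ∈ A, |A| = a, |N_G(A)| = b, and the subgraph of G induced on A is connected. Then |𝒞(v,a,b)| = C(a+b−1, b); in particular, the bound |𝒞(v,a,b)| ≤ C(a+b−1,b) is attained with equality for the star. -/
/-- `vNbhd G S` is the external vertex neighborhood `N_G(S)`: the vertices outside `S`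
having a neighbor in `S`. -/
def vNbhd {V : Type*} (G : SimpleGraph V) (S : Set V) : Set V :=
  {v | v ∉ S ∧ ∃ u ∈ S, G.Adj u v}

/-- Tightness of the counting proposition for the star `K_{1,a+b-1}`: if `G` is the star
on `a + b` vertices with center `v` (so `v` is joined to the `a + b - 1` other vertices and
there are no other edges), then the number of connected vertex sets `A` with `v ∈ A`,
`|A| = a` and `|N_G(A)| = b` is exactly `C(a + b - 1, b)`. -/
theorem count_connected_sets_star (a b : ℕ) (ha : 1 ≤ a)
    (G : SimpleGraph (Fin (a + b))) (v : Fin (a + b))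
    (hstar : ∀ u w : Fin (a + b), G.Adj u w ↔ u ≠ w ∧ (u = v ∨ w = v)) :
    {A : Set (Fin (a + b)) | v ∈ A ∧ A.ncard = a ∧ (vNbhd G A).ncard = b ∧
        (G.induce A).Connected}.ncard = (a + b - 1).choose b := by
  classical
  have hset : {A : Set (Fin (a + b)) | v ∈ A ∧ A.ncard = a ∧ (vNbhd G A).ncard = b ∧
        (G.induce A).Connected} = {A : Set (Fin (a + b)) | v ∈ A ∧ A.ncard = a} := by
    ext A
    simp only [Set.mem_setOf_eq]
    constructor
    · rintro ⟨h1, h2, _, _⟩; exact ⟨h1, h2⟩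
    · rintro ⟨h1, h2⟩
      refine ⟨h1, h2, ?_, ?_⟩
      · have hco : vNbhd G A = Aᶜ := by
          ext u
          constructor
          · rintro ⟨hu, -⟩; exact hu
          · intro hu
            exact ⟨hu, v, h1, (hstar v u).2 ⟨fun h => hu (h ▸ h1), Or.inl rfl⟩⟩
        rw [hco]
        have := Set.ncard_add_ncard_compl A
        simp [Nat.card_eq_fintype_card] at this
        omega
      · rw [SimpleGraph.connected_iff]
        refine ⟨?_, ⟨⟨v, h1⟩⟩⟩
        have hreach : ∀ x : A, (G.induce A).Reachable x ⟨v, h1⟩ := by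
          rintro ⟨u, hu⟩
          by_cases h : u = v
          · subst h; exact SimpleGraph.Reachable.refl _
          · exact SimpleGraph.Adj.reachable
              (by simp only [SimpleGraph.comap_adj, Function.Embedding.coe_subtype]
                  exact (hstar u v).2 ⟨h, Or.inr rfl⟩)
        intro x y
        exact (hreach x).trans (hreach y).symm
  rw [hset]
  have key : {A : Set (Fin (a + b)) | v ∈ A ∧ A.ncard = a}
      = ↑(((Finset.univ.erase v).powersetCard (a - 1)).image
          (fun B : Finset (Fin (a + b)) => ((insert v B : Finset (Fin (a + b))) : Set (Fin (a + b))))) := by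
    ext A
    simp only [Finset.coe_image, Set.mem_image, Finset.mem_coe, Finset.mem_powersetCard,
      Set.mem_setOf_eq]
    constructor
    · rintro ⟨h1, h2⟩
      have hA : A.toFinset.card = a := by
        rw [← Set.ncard_eq_toFinset_card' A, h2]
      have hvA : v ∈ A.toFinset := by simpa using h1
      refine ⟨A.toFinset.erase v, ⟨?_, ?_⟩, ?_⟩
      · intro x hx
        simp only [Finset.mem_erase] at hx ⊢
        exact ⟨hx.1, Finset.mem_univ x⟩
      · rw [Finset.card_erase_of_mem hvA, hA]
      · rw [Finset.insert_erase hvA]; simp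
    · rintro ⟨B, ⟨hB1, hB2⟩, rfl⟩
      have hvB : v ∉ B := fun h => (Finset.mem_erase.1 (hB1 h)).1 rfl
      refine ⟨by simp, ?_⟩
      rw [Set.ncard_coe_finset, Finset.card_insert_of_notMem hvB, hB2]
      omega
  rw [key, Set.ncard_coe_finset]
  rw [Finset.card_image_of_injOn, Finset.card_powersetCard,
    Finset.card_erase_of_mem (Finset.mem_univ v), Finset.card_univ, Fintype.card_fin]
  · rw [← Nat.choose_symm (by omega : b ≤ a + b - 1)]
    congr 1
    omega
  · intro B1 h1 B2 h2 h
    simp only [Finset.mem_coe, Finset.mem_powersetCard] at h1 h2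
    have hv1 : v ∉ B1 := fun hh => (Finset.mem_erase.1 (h1.1 hh)).1 rfl
    have hv2 : v ∉ B2 := fun hh => (Finset.mem_erase.1 (h2.1 hh)).1 rfl
    have := Finset.coe_injective h
    calc B1 = (insert v B1).erase v := by rw [Finset.erase_insert hv1]
    _ = (insert v B2).erase v := by rw [this]
    _ = B2 := Finset.erase_insert hv2
end

section
/- Let D* be a positive real, and let H be a connected graph on n vertices such that e_H(S) ≤ D*·|S| for every vertex set S. Define π(S) = (2·e_H(S) + |∂_H S|)/(2·e(H)). Then every vertex set S that is connected in H and satisfies π(S) ≤ 1/2 has |S| ≤ (D*·n + 1)/(D* + 1). -/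
/-- `edgeBdry H S` is the set of edges of `H` with exactly one endpoint in `S`. -/
def edgeBdry {V : Type*} (H : SimpleGraph V) (S : Set V) : Set (Sym2 V) :=
  {e | e ∈ H.edgeSet ∧ ∃ u v, e = s(u, v) ∧ u ∈ S ∧ v ∉ S}

/-- `eIn H S` is the number of edges of `H` with both endpoints in `S`. -/
noncomputable def eIn {V : Type*} (H : SimpleGraph V) (S : Set V) : ℕ :=
  {e ∈ H.edgeSet | ∀ v ∈ e, v ∈ S}.ncard

/-- `piWeight H S = π(S) = (2 e_H(S) + |∂_H S|) / (2 e(H))`. -/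
noncomputable def piWeight {V : Type*} (H : SimpleGraph V) (S : Set V) : ℝ :=
  (2 * eIn H S + (edgeBdry H S).ncard) / (2 * H.edgeSet.ncard)


/-! A set `S` that is connected in `H` spans a tree, so `|S| ≤ e_H(S) + 1`. Every edge of `H` lies
inside `S`, inside `Sᶜ` or on `∂_H S`, so `π(S) ≤ 1/2` says exactly `e_H(S) ≤ e_H(Sᶜ)`, and sparsity
of `Sᶜ` gives `|S| ≤ D*·(n - |S|) + 1`. -/

lemma eIn_eq_ncard_edgeSet_induce {V : Type*} (H : SimpleGraph V) (S : Set V) :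
    eIn H S = (H.induce S).edgeSet.ncard := by
  rw [eIn, ← Set.ncard_image_of_injective _ (Sym2.map.injective Subtype.val_injective)]
  congr 1
  ext e
  induction e with
  | _ x y =>
    constructor
    · rintro ⟨hxy, hS⟩
      exact ⟨s(⟨x, hS x (Sym2.mem_mk_left x y)⟩, ⟨y, hS y (Sym2.mem_mk_right x y)⟩), hxy, rfl⟩
    · rintro ⟨⟨a, b⟩, he, hmap⟩
      simp only [Sym2.map_mk, Sym2.eq_iff] at hmap
      simp only [Set.mem_ofPred_eq, SimpleGraph.mem_edgeSet, Sym2.mem_iff, forall_eq_or_imp, forall_eq]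
      rcases hmap with ⟨rfl, rfl⟩ | ⟨rfl, rfl⟩
      · exact ⟨he, a.2, b.2⟩
      · exact ⟨he.symm, b.2, a.2⟩

lemma ncard_edgeSet_eq_eIn_add_eIn_compl_add_ncard_edgeBdry {V : Type*} [Finite V]
    (H : SimpleGraph V) (S : Set V) :
    H.edgeSet.ncard = eIn H S + eIn H Sᶜ + (edgeBdry H S).ncard := by
  set inside := {e ∈ H.edgeSet | ∀ v ∈ e, v ∈ S}
  set outside := {e ∈ H.edgeSet | ∀ v ∈ e, v ∈ Sᶜ}
  have hsplit : H.edgeSet = inside ∪ outside ∪ edgeBdry H S := by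
    ext e
    induction e with
    | _ x y =>
      simp only [inside, outside, edgeBdry, Set.mem_union, Set.mem_ofPred_eq, Sym2.mem_iff,
        Sym2.eq_iff]
      by_cases hx : x ∈ S <;> by_cases hy : y ∈ S <;> grind
  have hdisj : Disjoint inside outside := by
    rw [Set.disjoint_left]
    rintro e ⟨-, hin⟩ ⟨-, hout⟩
    exact hout _ (Sym2.out_fst_mem e) (hin _ (Sym2.out_fst_mem e))
  have hdisj_bdry : Disjoint (inside ∪ outside) (edgeBdry H S) := by
    rw [Set.disjoint_left]
    rintro e (⟨-, hall⟩ | ⟨-, hall⟩) ⟨-, u, v, rfl, hu, hv⟩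
    · exact hv (hall v (Sym2.mem_mk_right u v))
    · exact hall u (Sym2.mem_mk_left u v) hu
  rw [hsplit, Set.ncard_union_eq hdisj_bdry, Set.ncard_union_eq hdisj]
  rfl

lemma ncard_le_eIn_add_one_of_connected_induce {V : Type*} {H : SimpleGraph V} {S : Set V}
    (hS : (H.induce S).Connected) : S.ncard ≤ eIn H S + 1 := by
  rw [eIn_eq_ncard_edgeSet_induce, ← Nat.card_coe_set_eq, ← Nat.card_coe_set_eq]
  exact hS.card_vert_le_card_edgeSet_add_one

lemma eIn_le_eIn_compl_of_piWeight_le_half {V : Type*} [Finite V] {H : SimpleGraph V}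
    {S : Set V} (hpi : piWeight H S ≤ 1 / 2) : eIn H S ≤ eIn H Sᶜ := by
  have hsplit := ncard_edgeSet_eq_eIn_add_eIn_compl_add_ncard_edgeBdry H S
  -- Without edges `piWeight` is the junk value `0 / 0 = 0`, but then `eIn H S = 0` anyway.
  rcases Nat.eq_zero_or_pos H.edgeSet.ncard with hm | hm
  · omega
  have hweight : (2 * eIn H S + (edgeBdry H S).ncard : ℝ) ≤ H.edgeSet.ncard := by
    rw [piWeight, div_le_iff₀ (by positivity)] at hpi
    linarith
  have : 2 * eIn H S + (edgeBdry H S).ncard ≤ H.edgeSet.ncard := by exact_mod_cast hweight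
  omega

theorem connected_set_small_of_piWeight_le_half_general {V : Type*} [Fintype V] (n : ℕ)
    (hn : Fintype.card V = n) (Dstar : ℝ) (hD : 0 < Dstar)
    (H : SimpleGraph V) (hsparse : ∀ S : Set V, (eIn H S : ℝ) ≤ Dstar * S.ncard) :
    ∀ S : Set V, (H.induce S).Connected → piWeight H S ≤ 1 / 2 →
      (S.ncard : ℝ) ≤ (Dstar * n + 1) / (Dstar + 1) := by
  intro S hS hpi
  have hS_le : (S.ncard : ℝ) ≤ eIn H S + 1 := by
    exact_mod_cast ncard_le_eIn_add_one_of_connected_induce hS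
  have hin_le : (eIn H S : ℝ) ≤ eIn H Sᶜ := by
    exact_mod_cast eIn_le_eIn_compl_of_piWeight_le_half hpi
  have hcard : (S.ncard + Sᶜ.ncard : ℝ) = n := by
    rw [← hn, ← Nat.card_eq_fintype_card]
    exact_mod_cast Set.ncard_add_ncard_compl S
  rw [le_div_iff₀ (by linarith), ← hcard]
  linarith [hsparse Sᶜ]

/-- Claim: in a connected `n`-vertex graph `H` with `e_H(S) ≤ D*·|S|` for every vertex set
`S`, every connected vertex set `S` with `π(S) ≤ 1/2` has `|S| ≤ (D*·n + 1)/(D* + 1)`. -/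
theorem connected_set_small_of_piWeight_le_half {V : Type*} [Fintype V] (n : ℕ)
    (hn : Fintype.card V = n) (Dstar : ℝ) (hD : 0 < Dstar)
    (H : SimpleGraph V) (hconn : H.Connected)
    (hsparse : ∀ S : Set V, (eIn H S : ℝ) ≤ Dstar * S.ncard) :
    ∀ S : Set V, (H.induce S).Connected → piWeight H S ≤ 1 / 2 →
      (S.ncard : ℝ) ≤ (Dstar * n + 1) / (Dstar + 1) :=
  connected_set_small_of_piWeight_le_half_general n hn Dstar hD H hsparse
end

section
/- Let G be a connected graph on n vertices and let s, m, b be positive integers with s < n. Let 𝒮(s,m,b) be the collection of vertex sets S with |S| = s such that the subgraph of G induced on S has exactly m connected components S₁,…,S_m and |N_G(S₁)| + … + |N_G(S_m)| = b. Then |𝒮(s,m,b)| ≤ C(n,m)·C(s−1,m−1)·C(b−1,m−1)·C(s+b−m, b), where C(·,·) is the binomial coefficient. -/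
/-- `compDecomp G S m b` says that the subgraph of `G` induced on `S` has exactly `m`
connected components `S₁, …, S_m` and `|N_G(S₁)| + … + |N_G(S_m)| = b`: there is a
partition of `S` into `m` nonempty sets, each inducing a connected subgraph, with no
edges of `G` between different parts, whose external neighborhoods have sizes summing
to `b`. -/
def compDecomp {V : Type*} (G : SimpleGraph V) (S : Set V) (m b : ℕ) : Prop :=
  ∃ f : Fin m → Set V,
    (∀ i, (f i).Nonempty) ∧
    (∀ i j, i ≠ j → Disjoint (f i) (f j)) ∧
    (⋃ i, f i) = S ∧
    (∀ i, (G.induce (f i)).Connected) ∧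
    (∀ i j, i ≠ j → ∀ u ∈ f i, ∀ w ∈ f j, ¬G.Adj u w) ∧
    (∑ i, (vNbhd G (f i)).ncard) = b

open Finset Function

lemma SimpleGraph.Preconnected.exists_adj_of_mem_of_notMem {V : Type*} {G : SimpleGraph V}
    (hG : G.Preconnected) {S : Set V} {u v : V} (hu : u ∈ S) (hv : v ∉ S) :
    ∃ x ∈ S, ∃ y ∉ S, G.Adj x y := by
  obtain ⟨p⟩ := hG u v
  obtain ⟨d, -, hd₁, hd₂⟩ := p.exists_boundary_dart S hu hv
  exact ⟨d.fst, hd₁, d.snd, hd₂, d.adj⟩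

section Exploration

variable {V : Type*} (G : SimpleGraph V)

/-- States of the exploration: `I` holds the vertices already placed in `A`, `X` those already
excluded from `A` (found in `N(A)`), and `a`, `c` count the vertices of `A` and of `N(A)` still
to be found. -/
def connectedSupersets (I X : Set V) (a c : ℕ) : Set (Set V) :=
  {A | I ⊆ A ∧ Disjoint A X ∧ (G.induce A).Connected ∧ (A \ I).ncard = a ∧
    (vNbhd G A \ X).ncard = c}

variable {G}

lemma vNbhd_nonempty (hG : G.Connected) {S : Set V} (hS : S.Nonempty) (hSV : S ≠ Set.univ) :
    (vNbhd G S).Nonempty := by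
  obtain ⟨u, hu⟩ := hS
  obtain ⟨v, hv⟩ := (Set.ne_univ_iff_exists_notMem S).1 hSV
  obtain ⟨x, hx, y, hy, hxy⟩ := hG.preconnected.exists_adj_of_mem_of_notMem hu hv
  exact ⟨y, hy, x, hx, hxy⟩

lemma eq_of_induce_connected {I A : Set V} (hIA : I ⊆ A) (hI : I.Nonempty)
    (hA : (G.induce A).Connected) (hclosed : ∀ u ∈ I, ∀ v ∈ A, G.Adj u v → v ∈ I) :
    A = I := by
  refine (Set.Subset.antisymm (fun v hv => ?_) hIA)
  by_contra hvI
  obtain ⟨u, hu⟩ := hI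
  obtain ⟨x, hx, y, hy, hxy⟩ := hA.preconnected.exists_adj_of_mem_of_notMem
    (S := {x : A | x.1 ∈ I}) (u := ⟨u, hIA hu⟩) (v := ⟨v, hv⟩) hu hvI
  exact hy (hclosed x hx y y.2 hxy)

lemma mem_connectedSupersets_singleton {r : V} {A : Set V} (hr : r ∈ A)
    (hA : (G.induce A).Connected) :
    A ∈ connectedSupersets G {r} ∅ (A.ncard - 1) (vNbhd G A).ncard :=
  ⟨Set.singleton_subset_iff.2 hr, Set.disjoint_empty A, hA,
    Set.ncard_sdiff_singleton_of_mem hr, by rw [Set.sdiff_empty]⟩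

variable [Finite V] {I X A : Set V} {a c : ℕ} {q : V}

lemma exists_of_mem_connectedSupersets_of_mem (hA : A ∈ connectedSupersets G I X a c)
    (hqA : q ∈ A) (hqI : q ∉ I) :
    ∃ a', a = a' + 1 ∧ A ∈ connectedSupersets G (insert q I) X a' c := by
  obtain ⟨hIA, hAX, hconn, ha, hc⟩ := hA
  have hdiff : A \ insert q I = (A \ I) \ {q} := by
    ext; simp only [Set.mem_sdiff, Set.mem_insert_iff, Set.mem_singleton_iff]; tauto
  have hpos : 0 < a := ha ▸ (Set.ncard_pos (Set.toFinite _)).2 ⟨q, hqA, hqI⟩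
  refine ⟨a - 1, by omega, Set.insert_subset hqA hIA, hAX, hconn, ?_, hc⟩
  rw [hdiff, Set.ncard_sdiff_singleton_of_mem (show q ∈ A \ I from ⟨hqA, hqI⟩), ha]

lemma exists_of_mem_connectedSupersets_of_notMem (hA : A ∈ connectedSupersets G I X a c)
    (hqA : q ∉ A) (hqX : q ∉ X) {u : V} (hu : u ∈ I) (huq : G.Adj u q) :
    ∃ c', c = c' + 1 ∧ A ∈ connectedSupersets G I (insert q X) a c' := by
  obtain ⟨hIA, hAX, hconn, ha, hc⟩ := hA
  have hq : q ∈ vNbhd G A \ X := ⟨⟨hqA, u, hIA hu, huq⟩, hqX⟩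
  have hdiff : vNbhd G A \ insert q X = (vNbhd G A \ X) \ {q} := by
    ext; simp only [Set.mem_sdiff, Set.mem_insert_iff, Set.mem_singleton_iff]; tauto
  have hpos : 0 < c := hc ▸ (Set.ncard_pos (Set.toFinite _)).2 ⟨q, hq⟩
  refine ⟨c - 1, by omega, hIA, Set.disjoint_insert_right.2 ⟨hqA, hAX⟩, hconn, ha, ?_⟩
  rw [hdiff, Set.ncard_sdiff_singleton_of_mem hq, hc]

lemma ncard_connectedSupersets_le_one (hI : I.Nonempty)
    (hclosed : ∀ u ∈ I, ∀ q, G.Adj u q → q ∉ I → q ∈ X) :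
    (connectedSupersets G I X a c).ncard ≤ 1 := by
  refine (Set.ncard_le_ncard (t := {I}) (fun A hA => ?_)).trans (Set.ncard_singleton I).le
  obtain ⟨hIA, hAX, hconn, -⟩ := hA
  refine eq_of_induce_connected hIA hI hconn fun u hu v hv huv => ?_
  by_contra hvI
  exact Set.disjoint_left.1 hAX hv (hclosed u hu v huv hvI)

theorem ncard_connectedSupersets_le (hI : I.Nonempty) :
    (connectedSupersets G I X a c).ncard ≤ (a + c).choose c := by
  obtain ⟨k, hk⟩ : ∃ k, a + c = k := ⟨_, rfl⟩
  rw [hk]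
  induction k generalizing I X a c with
  | zero =>
    obtain ⟨rfl, rfl⟩ : a = 0 ∧ c = 0 := by omega
    refine (Set.ncard_le_ncard (t := {I}) (fun A hA => ?_)).trans (Set.ncard_singleton I).le
    obtain ⟨hIA, -, -, ha, -⟩ := hA
    exact (Set.sdiff_eq_empty.1 ((Set.ncard_eq_zero (Set.toFinite _)).1 ha)).antisymm hIA
  | succ k ih =>
    by_cases hfront : ∃ u ∈ I, ∃ q, G.Adj u q ∧ q ∉ I ∧ q ∉ X
    swap
    · push Not at hfront
      exact (ncard_connectedSupersets_le_one hI hfront).trans (Nat.choose_pos (by omega))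
    obtain ⟨u, hu, q, huq, hqI, hqX⟩ := hfront
    set F := connectedSupersets G I X a c
    -- `q` lies either in `A` or in `N(A) \ X`; Pascal's rule adds up the two bounds.
    have hin : (F ∩ {A | q ∈ A}).ncard ≤ k.choose c := by
      rcases (F ∩ {A | q ∈ A}).eq_empty_or_nonempty with h | ⟨A₀, hA₀, hqA₀⟩
      · simp [h]
      obtain ⟨a', rfl, -⟩ := exists_of_mem_connectedSupersets_of_mem hA₀ hqA₀ hqI
      refine (Set.ncard_le_ncard fun A hA => ?_).trans
        (ih (X := X) (a := a') (c := c) (hI.mono (Set.subset_insert q I)) (by omega))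
      obtain ⟨a'', h, hA'⟩ := exists_of_mem_connectedSupersets_of_mem hA.1 hA.2 hqI
      rwa [show a' = a'' by omega]
    have hout : (F \ {A | q ∈ A}).ncard + k.choose c ≤ (k + 1).choose c := by
      rcases (F \ {A | q ∈ A}).eq_empty_or_nonempty with h | ⟨A₀, hA₀, hqA₀⟩
      · simpa [h] using Nat.choose_le_choose c k.le_succ
      obtain ⟨c', rfl, -⟩ := exists_of_mem_connectedSupersets_of_notMem hA₀ hqA₀ hqX hu huq
      rw [Nat.choose_succ_succ']
      gcongr
      refine (Set.ncard_le_ncard (t := connectedSupersets G I (insert q X) a c')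
        fun A hA => ?_).trans (ih (a := a) hI (by omega))
      obtain ⟨c'', h, hA'⟩ := exists_of_mem_connectedSupersets_of_notMem hA.1 hA.2 hqX hu huq
      rwa [show c' = c'' by omega]
    rw [← Set.ncard_inter_add_ncard_sdiff_eq_ncard F {A | q ∈ A}]
    omega

end Exploration

section Counting

lemma Nat.choose_mul_choose_le_choose_add (a b c d : ℕ) :
    a.choose c * b.choose d ≤ (a + b).choose (c + d) := by
  rw [Nat.add_choose_eq]
  exact single_le_sum (f := fun ij : ℕ × ℕ => a.choose ij.1 * b.choose ij.2)
    (fun _ _ => Nat.zero_le _) (mem_antidiagonal.2 rfl : (c, d) ∈ antidiagonal (c + d))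

lemma Finset.prod_choose_le_choose_sum {ι : Type*} (s : Finset ι) (x y : ι → ℕ) :
    ∏ i ∈ s, (x i).choose (y i) ≤ (∑ i ∈ s, x i).choose (∑ i ∈ s, y i) := by
  classical
  induction s using Finset.induction_on with
  | empty => simp
  | insert j s hj ih =>
    rw [prod_insert hj, sum_insert hj, sum_insert hj]
    exact (Nat.mul_le_mul_left _ ih).trans (Nat.choose_mul_choose_le_choose_add _ _ _ _)

lemma card_strictMono_le (α : Type*) [Fintype α] [LinearOrder α] (m : ℕ)
    [DecidablePred (StrictMono : (Fin m → α) → Prop)] :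
    #{r : Fin m → α | StrictMono r} ≤ (Fintype.card α).choose m := by
  rw [← card_univ, ← card_powersetCard]
  refine card_le_card_of_injOn (fun r => univ.image r) (fun r hr => ?_) fun r hr r' hr' h => ?_
  · rw [mem_coe, mem_filter] at hr
    rw [mem_coe, mem_powersetCard_univ, card_image_of_injective _ hr.2.injective, card_fin]
  · rw [mem_coe, mem_filter] at hr hr'
    have h' := congrArg ((↑) : Finset α → Set α) h
    rw [coe_image, coe_image, coe_univ, Set.image_univ, Set.image_univ] at h'
    exact (hr.2.range_inj hr'.2).1 h'

def positiveCompositions (m t : ℕ) : Finset (Fin m → ℕ) :=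
  {a ∈ Fintype.piFinset fun _ => Icc 1 t | ∑ i, a i = t}

lemma mem_positiveCompositions {m t : ℕ} {a : Fin m → ℕ} :
    a ∈ positiveCompositions m t ↔ (∀ i, 0 < a i) ∧ ∑ i, a i = t := by
  simp only [positiveCompositions, mem_filter, Fintype.mem_piFinset, mem_Icc]
  refine ⟨fun h => ⟨fun i => (h.1 i).1, h.2⟩, fun h => ⟨fun i => ⟨h.1 i, ?_⟩, h.2⟩⟩
  exact h.2 ▸ single_le_sum (fun j _ => Nat.zero_le (a j)) (mem_univ i)

lemma card_positiveCompositions_le {m : ℕ} (hm : 0 < m) (t : ℕ) :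
    #(positiveCompositions m t) ≤ (t - 1).choose (m - 1) := by
  by_cases hmt : m ≤ t
  swap
  · refine (card_eq_zero.2 (eq_empty_of_forall_notMem fun a ha => hmt ?_)).trans_le
      (Nat.zero_le _)
    obtain ⟨hpos, hsum⟩ := mem_positiveCompositions.1 ha
    calc m = ∑ _i : Fin m, 1 := by simp
      _ ≤ t := hsum ▸ sum_le_sum fun i _ => hpos i
  calc #(positiveCompositions m t)
      ≤ #((univ : Finset (Fin m)).finsuppAntidiag (t - m)) := by
        refine card_le_card_of_injOn (fun a => Finsupp.equivFunOnFinite.symm (a - 1))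
          (fun a ha => ?_) fun a ha a' ha' h => ?_
        · obtain ⟨hpos, hsum⟩ := mem_positiveCompositions.1 ha
          simp only [mem_coe, mem_finsuppAntidiag, subset_univ, and_true]
          show ∑ i, (a i - 1) = t - m
          rw [sum_tsub_distrib _ fun i _ => hpos i, hsum]
          simp
        · funext i
          have hi := congrFun (Finsupp.equivFunOnFinite.symm.injective h) i
          simp only [Pi.sub_apply, Pi.one_apply] at hi
          have := (mem_positiveCompositions.1 ha).1 i
          have := (mem_positiveCompositions.1 ha').1 i
          omega
    _ = (t - 1).choose (m - 1) := by
        rw [card_finsuppAntidiag_nat_eq_choose, card_univ, Fintype.card_fin,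
          show m + (t - m) - 1 = t - 1 by omega]
        exact Nat.choose_symm_of_eq_add (by omega)

end Counting

lemma exists_perm_strictMono_mem {α : Type*} [LinearOrder α] {m : ℕ} {f : Fin m → Set α}
    (hne : ∀ i, (f i).Nonempty) (hdisj : Pairwise (Disjoint on f)) :
    ∃ σ : Equiv.Perm (Fin m), ∃ r : Fin m → α, StrictMono r ∧ ∀ i, r i ∈ f (σ i) := by
  choose r hr using hne
  have hinj : Injective r := fun i j hij => by
    by_contra hne
    exact Set.disjoint_left.1 (hdisj hne) (hr i) (hij ▸ hr j)
  exact ⟨Tuple.sort r, r ∘ Tuple.sort r, (Tuple.monotone_sort r).strictMono_of_injective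
    (hinj.comp (Tuple.sort r).injective), fun i => hr _⟩

section Assembly

variable {V : Type*} [Finite V] (G : SimpleGraph V)

open scoped Classical in
noncomputable def rootedUnions {m : ℕ} (r : Fin m → V) (a c : Fin m → ℕ) :
    Finset (Set V) :=
  (Fintype.piFinset fun i =>
    (Set.toFinite (connectedSupersets G {r i} ∅ (a i - 1) (c i))).toFinset).image
    fun A => ⋃ i, A i

variable {G}

lemma card_rootedUnions_le {m s b : ℕ} (r : Fin m → V) {a c : Fin m → ℕ}
    (ha : a ∈ positiveCompositions m s) (hc : c ∈ positiveCompositions m b) :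
    #(rootedUnions G r a c) ≤ (s + b - m).choose b := by
  obtain ⟨ha0, hsa⟩ := mem_positiveCompositions.1 ha
  have hsc := (mem_positiveCompositions.1 hc).2
  have hsum : ∑ i, (a i - 1 + c i) + m = s + b := by
    calc ∑ i, (a i - 1 + c i) + m = ∑ i, (a i - 1 + c i + 1) := by simp [sum_add_distrib]
      _ = ∑ i, (a i + c i) := sum_congr rfl fun i _ => by have := ha0 i; omega
      _ = s + b := by rw [sum_add_distrib, hsa, hsc]
  calc #(rootedUnions G r a c)
      ≤ ∏ i, (a i - 1 + c i).choose (c i) := by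
        refine card_image_le.trans
          ((Fintype.card_piFinset _).trans_le (prod_le_prod' fun i _ => ?_))
        rw [← Set.ncard_eq_toFinset_card]
        exact ncard_connectedSupersets_le (Set.singleton_nonempty _)
    _ ≤ (∑ i, (a i - 1 + c i)).choose (∑ i, c i) := prod_choose_le_choose_sum _ _ _
    _ = (s + b - m).choose b := by rw [hsc, show ∑ i, (a i - 1 + c i) = s + b - m by omega]

lemma exists_mem_rootedUnions [LinearOrder V] (hG : G.Connected) {S : Set V}
    (hSV : S ≠ Set.univ) {m b : ℕ} (hS : compDecomp G S m b) :
    ∃ r : Fin m → V, StrictMono r ∧ ∃ a ∈ positiveCompositions m S.ncard,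
      ∃ c ∈ positiveCompositions m b, S ∈ rootedUnions G r a c := by
  obtain ⟨f, hne, hdisj, hunion, hconn, -, hb⟩ := hS
  obtain ⟨σ, r, hr, hrf⟩ := exists_perm_strictMono_mem hne hdisj
  have hsub (j : Fin m) : f j ⊆ S := hunion ▸ Set.subset_iUnion f j
  have hsize : ∑ i, (f (σ i)).ncard = S.ncard := by
    rw [Equiv.sum_comp σ fun j => (f j).ncard, ← hunion,
      Set.ncard_iUnion_of_finite (fun _ => Set.toFinite _) hdisj, finsum_eq_sum_of_fintype]
  refine ⟨r, hr, _, mem_positiveCompositions.2 ⟨fun i =>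
      (Set.ncard_pos (Set.toFinite _)).2 (hne _), hsize⟩,
    _, mem_positiveCompositions.2 ⟨fun i => (Set.ncard_pos (Set.toFinite _)).2
      (vNbhd_nonempty hG (hne _) fun h => hSV (Set.eq_univ_of_univ_subset (h ▸ hsub _))),
      (Equiv.sum_comp σ _).trans hb⟩, ?_⟩
  refine mem_image.2 ⟨f ∘ σ, Fintype.mem_piFinset.2 fun i => ?_, ?_⟩
  · rw [Set.Finite.mem_toFinset]
    exact mem_connectedSupersets_singleton (hrf i) (hconn _)
  · exact (σ.surjective.iUnion_comp f).trans hunion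

end Assembly

theorem count_sets_with_components_general {V : Type*} [Fintype V] (n : ℕ)
    (hn : Fintype.card V = n) (G : SimpleGraph V) (hconn : G.Connected)
    (s m b : ℕ) (hm : 1 ≤ m) (hsn : s < n) :
    {S : Set V | S.ncard = s ∧ compDecomp G S m b}.ncard ≤
      n.choose m * (s - 1).choose (m - 1) * (b - 1).choose (m - 1) *
        (s + b - m).choose b := by
  classical
  let : LinearOrder V := LinearOrder.lift' _ (Fintype.equivFin V).injective
  let T := ({r : Fin m → V | StrictMono r} : Finset _) ×ˢ positiveCompositions m s ×ˢ
    positiveCompositions m b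
  have hcover : {S : Set V | S.ncard = s ∧ compDecomp G S m b} ⊆
      ↑(T.biUnion fun t => rootedUnions G t.1 t.2.1 t.2.2) := by
    rintro S ⟨hSs, hS⟩
    have hSV : S ≠ Set.univ := by
      rw [Ne, Set.eq_univ_iff_ncard, Nat.card_eq_fintype_card]
      omega
    obtain ⟨r, hr, a, ha, c, hc, hSr⟩ := exists_mem_rootedUnions hconn hSV hS
    rw [hSs] at ha
    exact mem_coe.2 (mem_biUnion.2 ⟨(r, a, c), by simp [T, hr, ha, hc], hSr⟩)
  calc {S : Set V | S.ncard = s ∧ compDecomp G S m b}.ncard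
      ≤ #(T.biUnion fun t => rootedUnions G t.1 t.2.1 t.2.2) :=
        (Set.ncard_le_ncard hcover).trans_eq (Set.ncard_coe_finset _)
    _ ≤ ∑ t ∈ T, #(rootedUnions G t.1 t.2.1 t.2.2) := card_biUnion_le
    _ ≤ ∑ _t ∈ T, (s + b - m).choose b := sum_le_sum fun t ht => by
        obtain ⟨ha, hc⟩ := mem_product.1 (mem_product.1 ht).2
        exact card_rootedUnions_le t.1 ha hc
    _ = #T * (s + b - m).choose b := by rw [sum_const, smul_eq_mul]
    _ ≤ _ := by
        rw [card_product, card_product, ← mul_assoc]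
        gcongr
        · exact hn ▸ card_strictMono_le V m
        · exact card_positiveCompositions_le hm s
        · exact card_positiveCompositions_le hm b

/-- Counting sets `S` of size `s` whose induced subgraph has exactly `m` connected
components with external boundaries summing to `b`. -/
theorem count_sets_with_components {V : Type*} [Fintype V] (n : ℕ)
    (hn : Fintype.card V = n) (G : SimpleGraph V) (hconn : G.Connected)
    (s m b : ℕ) (hs : 1 ≤ s) (hm : 1 ≤ m) (hb : 1 ≤ b) (hsn : s < n) :
    {S : Set V | S.ncard = s ∧ compDecomp G S m b}.ncard ≤
      n.choose m * (s - 1).choose (m - 1) * (b - 1).choose (m - 1) *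
        (s + b - m).choose b :=
  count_sets_with_components_general n hn G hconn s m b hm hsn
end

section
/- For every ε ∈ (0, 1/3], δ > 0, and K ≥ 1 there exists n₀ (depending only on ε, δ, K) such that the following holds for all n ≥ n₀. Let H be a connected graph on n vertices with e(H) ≤ (1+ε)·n such that (i) every vertex set S satisfies e_H(S) ≤ 3·|S|, and (ii) every vertex set S that is connected in H and satisfies K·log n ≤ |S| ≤ 3n/4 has |∂_H S| ≥ δ·|S|. Then the diameter of H is at most 2·(K + 1/log(1+δ/3))·log n. -/
namespace SimpleGraph

variable {V : Type*} {G : SimpleGraph V}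

lemma Walk.dist_getVert_of_length_eq_dist {u v : V} (p : G.Walk u v)
    (hp : p.length = G.dist u v) {i : ℕ} (hi : i ≤ p.length) :
    G.dist u (p.getVert i) = i := by
  have hstart : G.dist u (p.getVert i) ≤ i :=
    (dist_le (p.take i)).trans (by simp [Walk.take_length])
  have hend : G.dist (p.getVert i) v ≤ p.length - i :=
    (dist_le (p.drop i)).trans (by simp [Walk.drop_length])
  have := (p.drop i).reachable.dist_triangle_right u
  omega

def closedBall (G : SimpleGraph V) (x : V) (t : ℕ) : Set V := {v | G.dist x v ≤ t}

@[simp]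
lemma mem_closedBall {x v : V} {t : ℕ} : v ∈ G.closedBall x t ↔ G.dist x v ≤ t := Iff.rfl

lemma closedBall_mono (x : V) {s t : ℕ} (h : s ≤ t) : G.closedBall x s ⊆ G.closedBall x t :=
  fun _ hv ↦ le_trans hv h

lemma Adj.mem_closedBall_succ {x u v : V} {t : ℕ} (huv : G.Adj u v)
    (hu : u ∈ G.closedBall x t) : v ∈ G.closedBall x (t + 1) := by
  have := huv.reachable.dist_triangle_right x
  rw [dist_eq_one_iff_adj.mpr huv] at this
  simp only [mem_closedBall] at hu ⊢
  omega

lemma Connected.induce_closedBall (hG : G.Connected) (x : V) (t : ℕ) :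
    (G.induce (G.closedBall x t)).Connected := by
  classical
  refine induce_connected_of_patches x (by simp) fun {v} hv ↦ ?_
  obtain ⟨p, hp⟩ := hG.exists_walk_length_eq_dist x v
  refine ⟨{w | w ∈ p.support}, fun w hw ↦ ?_, p.start_mem_support, p.end_mem_support,
    p.connected_induce_support.preconnected _ _⟩
  have := p.length_takeUntil_le_length hw
  exact (dist_le (p.takeUntil w hw)).trans (by simp only [mem_closedBall] at hv; omega)

lemma Connected.succ_le_ncard_closedBall [Finite V] (hG : G.Connected) {x : V} {t : ℕ}
    (hne : G.closedBall x t ≠ Set.univ) : t + 1 ≤ (G.closedBall x t).ncard := by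
  obtain ⟨v, hv⟩ := (Set.ne_univ_iff_exists_notMem _).mp hne
  obtain ⟨p, hp⟩ := hG.exists_walk_length_eq_dist x v
  simp only [mem_closedBall, not_le] at hv
  have hdist : ∀ i ≤ t, G.dist x (p.getVert i) = i := fun i hi ↦
    p.dist_getVert_of_length_eq_dist hp (by omega)
  calc t + 1 = (Set.Iic t).ncard := by simp
    _ ≤ (G.closedBall x t).ncard :=
      Set.ncard_le_ncard_of_injOn p.getVert (fun i hi ↦ (hdist i hi).le.trans hi)
        fun i hi j hj hij ↦ by rw [← hdist i hi, ← hdist j hj, hij]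

lemma Connected.dist_le_of_card_lt_ncard_add_ncard [Finite V] (hG : G.Connected) {u w : V}
    {r : ℕ} (h : Nat.card V < (G.closedBall u r).ncard + (G.closedBall w r).ncard) :
    G.dist u w ≤ 2 * r := by
  obtain ⟨z, hzu, hzw⟩ : (G.closedBall u r ∩ G.closedBall w r).Nonempty := by
    by_contra hempty
    rw [Set.not_nonempty_iff_eq_empty, ← Set.disjoint_iff_inter_eq_empty] at hempty
    have := Set.ncard_union_eq hempty
    have := Set.ncard_le_card (G.closedBall u r ∪ G.closedBall w r)
    omega
  have := hG.dist_triangle (u := u) (v := z) (w := w)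
  rw [mem_closedBall] at hzu hzw
  rw [dist_comm] at hzw
  omega

end SimpleGraph

open SimpleGraph

lemma eIn_add_ncard_edgeBdry_le {V : Type*} [Finite V] {H : SimpleGraph V} {S T : Set V}
    (hST : S ⊆ T) (hnbr : ∀ u ∈ S, ∀ v, H.Adj u v → v ∈ T) :
    eIn H S + (edgeBdry H S).ncard ≤ eIn H T := by
  have hdisj : Disjoint {e ∈ H.edgeSet | ∀ v ∈ e, v ∈ S} (edgeBdry H S) := by
    rw [Set.disjoint_left]
    rintro e ⟨-, hS⟩ ⟨-, u, v, rfl, -, hv⟩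
    exact hv (hS v (Sym2.mem_mk_right u v))
  have hsub : {e ∈ H.edgeSet | ∀ v ∈ e, v ∈ S} ∪ edgeBdry H S ⊆
      {e ∈ H.edgeSet | ∀ v ∈ e, v ∈ T} := by
    rintro e (⟨he, hS⟩ | ⟨he, u, v, rfl, hu, -⟩)
    · exact ⟨he, fun w hw ↦ hST (hS w hw)⟩
    · refine ⟨he, fun w hw ↦ ?_⟩
      rcases Sym2.mem_iff.mp hw with rfl | rfl
      exacts [hST hu, hnbr u hu w he]
  unfold eIn
  rw [← Set.ncard_union_eq hdisj]
  exact Set.ncard_le_ncard hsub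

section BallGrowth

variable {V : Type*} [Finite V] {H : SimpleGraph V} {D δ m N : ℝ}

lemma eIn_closedBall_add_le_eIn_closedBall_succ (x : V) {t : ℕ}
    (hexp : δ * (H.closedBall x t).ncard ≤ (edgeBdry H (H.closedBall x t)).ncard) :
    eIn H (H.closedBall x t) + δ * (H.closedBall x t).ncard ≤ eIn H (H.closedBall x (t + 1)) := by
  have : (eIn H (H.closedBall x t) + (edgeBdry H (H.closedBall x t)).ncard : ℝ) ≤
      eIn H (H.closedBall x (t + 1)) := by
    exact_mod_cast eIn_add_ncard_edgeBdry_le (closedBall_mono x t.le_succ)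
      fun _ hu _ huv ↦ huv.mem_closedBall_succ hu
  linarith

lemma mul_eIn_closedBall_le_eIn_closedBall_succ (hD : 0 < D) (hδ : 0 ≤ δ) (x : V) {t : ℕ}
    (hsparse : (eIn H (H.closedBall x t) : ℝ) ≤ D * (H.closedBall x t).ncard)
    (hexp : δ * (H.closedBall x t).ncard ≤ (edgeBdry H (H.closedBall x t)).ncard) :
    (1 + δ / D) * eIn H (H.closedBall x t) ≤ eIn H (H.closedBall x (t + 1)) := by
  have hstep := eIn_closedBall_add_le_eIn_closedBall_succ x hexp
  have : δ / D * eIn H (H.closedBall x t) ≤ δ * (H.closedBall x t).ncard := by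
    rw [div_mul_eq_mul_div, div_le_iff₀ hD, mul_assoc, mul_comm _ D]
    gcongr
  linarith

lemma lt_ncard_closedBall (hH : H.Connected) (hD : 0 < D) (hδ : 0 ≤ δ)
    (hsparse : ∀ S : Set V, (eIn H S : ℝ) ≤ D * S.ncard)
    (hexp : ∀ S : Set V, (H.induce S).Connected → m ≤ S.ncard → S.ncard ≤ N →
      δ * S.ncard ≤ (edgeBdry H S).ncard)
    (hN : N < Nat.card V) (x : V) {t k : ℕ} (hm : m ≤ t + 1)
    (hk : D * N < δ * (1 + δ / D) ^ k * m) :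
    N < (H.closedBall x (t + 1 + k)).ncard := by
  by_contra! hsmall
  have hbounded : ∀ i ≤ t + 1 + k, ((H.closedBall x i).ncard : ℝ) ≤ N := fun i hi ↦
    le_trans (by exact_mod_cast Set.ncard_le_ncard (closedBall_mono x hi)) hsmall
  have hlarge : ∀ i ≤ t + 1 + k, i + 1 ≤ (H.closedBall x i).ncard := fun i hi ↦
    hH.succ_le_ncard_closedBall fun huniv ↦ by
      have := hbounded i hi
      rw [huniv, Set.ncard_univ] at this
      linarith
  have hexpands : ∀ i, t ≤ i → i < t + 1 + k →
      δ * (H.closedBall x i).ncard ≤ (edgeBdry H (H.closedBall x i)).ncard := fun i hti hik ↦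
    hexp _ (hH.induce_closedBall x i)
      (hm.trans (by exact_mod_cast (hlarge i hik.le).trans' (by omega))) (hbounded i hik.le)
  have hgeom : ∀ j ≤ k, δ * (1 + δ / D) ^ j * m ≤ eIn H (H.closedBall x (t + 1 + j)) := by
    intro j hj
    induction j with
    | zero =>
      have hbase := eIn_closedBall_add_le_eIn_closedBall_succ x (hexpands t le_rfl (by omega))
      have : m ≤ (H.closedBall x t).ncard := hm.trans (by exact_mod_cast hlarge t (by omega))
      simp only [pow_zero, mul_one, add_zero]
      linarith [mul_le_mul_of_nonneg_left this hδ, (eIn H (H.closedBall x t)).cast_nonneg (α := ℝ)]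
    | succ j ih =>
      calc δ * (1 + δ / D) ^ (j + 1) * m = (1 + δ / D) * (δ * (1 + δ / D) ^ j * m) := by ring
        _ ≤ (1 + δ / D) * eIn H (H.closedBall x (t + 1 + j)) := by
          gcongr
          exact ih (by omega)
        _ ≤ eIn H (H.closedBall x (t + 1 + (j + 1))) :=
          mul_eIn_closedBall_le_eIn_closedBall_succ hD hδ x (hsparse _)
            (hexpands _ (by omega) (by omega))
  have hupper := (hsparse (H.closedBall x (t + 1 + k))).trans
    (mul_le_mul_of_nonneg_left hsmall hD.le)
  linarith [hgeom k le_rfl]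

end BallGrowth

lemma exists_radii_of_log_large {δ K C b : ℝ} {n : ℕ} (hδ : 0 < δ) (hK : 1 ≤ K) (hC : 0 ≤ C)
    (hb : 1 < b) (hn : 2 * Real.log b + C * b ^ 2 / δ < Real.log n) :
    ∃ t k : ℕ, K * Real.log n ≤ t + 1 ∧ C * n < δ * b ^ k * (K * Real.log n) ∧
      ((t + 1 + k : ℕ) : ℝ) ≤ (K + 1 / Real.log b) * Real.log n := by
  set ℓ := Real.log n
  set L := Real.log b
  have hL : 0 < L := Real.log_pos hb
  have hCb : 0 ≤ C * b ^ 2 / δ := by positivity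
  have hℓL : 2 < ℓ / L := by rw [lt_div_iff₀ hL]; linarith
  have hn0 : (0 : ℝ) < n := by
    rcases Nat.eq_zero_or_pos n with rfl | h
    · simp only [ℓ, Nat.cast_zero, Real.log_zero] at hn
      linarith
    · exact_mod_cast h
  -- Balls of radius `t` are large enough to expand; the remaining `r - (t + 1) ≥ ℓ / L - 2`
  -- growth steps multiply the edge count by at least `b ^ (ℓ / L - 2) = n / b ^ 2`.
  set t := ⌊K * ℓ⌋₊
  set r := ⌊(K + 1 / L) * ℓ⌋₊
  have ht : (t : ℝ) ≤ K * ℓ := Nat.floor_le (by positivity)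
  have hr : (K + 1 / L) * ℓ < r + 1 := Nat.lt_floor_add_one _
  have hsplit : (K + 1 / L) * ℓ = K * ℓ + ℓ / L := by ring
  have htr : t + 1 ≤ r := by
    have : (t : ℝ) + 1 < r := by linarith
    exact_mod_cast this.le
  refine ⟨t, r - (t + 1), (Nat.lt_floor_add_one _).le, ?_, ?_⟩
  · have hk : ℓ - 2 * L ≤ ((r - (t + 1) : ℕ) : ℝ) * L := by
      rw [Nat.cast_sub htr, ← div_le_iff₀ hL]
      push_cast
      rw [sub_div, mul_div_cancel_right₀ _ hL.ne']
      linarith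
    have hpow : n / b ^ 2 ≤ b ^ (r - (t + 1)) := by
      calc n / b ^ 2 = Real.exp (ℓ - 2 * L) := by
            rw [Real.exp_sub, Real.exp_log hn0, show (2 : ℝ) * L = ((2 : ℕ) : ℝ) * L by norm_num,
              Real.exp_nat_mul, Real.exp_log (by linarith)]
        _ ≤ Real.exp (((r - (t + 1) : ℕ) : ℝ) * L) := Real.exp_le_exp.mpr hk
        _ = b ^ (r - (t + 1)) := by rw [Real.exp_nat_mul, Real.exp_log (by linarith)]
    have hδℓ : C * b ^ 2 < δ * (K * ℓ) := by
      have : C * b ^ 2 / δ < ℓ := by linarith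
      rw [div_lt_iff₀ hδ] at this
      nlinarith [mul_le_mul_of_nonneg_left hK (by positivity : 0 ≤ δ * ℓ)]
    calc C * n = n / b ^ 2 * (C * b ^ 2) := by field_simp
      _ < n / b ^ 2 * (δ * (K * ℓ)) := by gcongr
      _ ≤ b ^ (r - (t + 1)) * (δ * (K * ℓ)) := by gcongr
      _ = δ * b ^ (r - (t + 1)) * (K * ℓ) := by ring
  · rw [Nat.add_sub_cancel' htr]
    exact Nat.floor_le (by positivity)

theorem diameter_from_edge_expansion_general (ε δ K : ℝ)
    (hδ : 0 < δ) (hK : 1 ≤ K) : ∃ n₀ : ℕ, ∀ n : ℕ, n₀ ≤ n →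
      ∀ {V : Type} [Fintype V], Fintype.card V = n →
        ∀ H : SimpleGraph V, H.Connected →
          ((H.edgeSet.ncard : ℝ) ≤ (1 + ε) * n) →
          (∀ S : Set V, (eIn H S : ℝ) ≤ 3 * S.ncard) →
          (∀ S : Set V, (H.induce S).Connected →
            K * Real.log n ≤ (S.ncard : ℝ) → (S.ncard : ℝ) ≤ 3 * n / 4 →
            δ * S.ncard ≤ ((edgeBdry H S).ncard : ℝ)) →
          ∀ u w : V, (H.dist u w : ℝ) ≤
            2 * (K + 1 / Real.log (1 + δ / 3)) * Real.log n := by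
  set b := 1 + δ / 3
  have hb : 1 < b := by simp only [b]; linarith [div_pos hδ three_pos]
  refine ⟨⌈Real.exp (2 * Real.log b + 9 / 4 * b ^ 2 / δ)⌉₊ + 1, ?_⟩
  intro n hn V _ hcard H hH _ hsparse hexp u w
  have hn0 : (0 : ℝ) < n := by exact_mod_cast (by omega : 0 < n)
  have hlog : 2 * Real.log b + 9 / 4 * b ^ 2 / δ < Real.log n :=
    (Real.lt_log_iff_exp_lt hn0).mpr (Nat.lt_of_ceil_lt (by omega))
  obtain ⟨t, k, hm, hgrowth, hr⟩ := exists_radii_of_log_large hδ hK (by norm_num) hb hlog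
  have hcardV : (Nat.card V : ℝ) = n := by rw [Nat.card_eq_fintype_card, hcard]
  have hball (x : V) : (3 * n / 4 : ℝ) < (H.closedBall x (t + 1 + k)).ncard :=
    lt_ncard_closedBall hH three_pos hδ.le hsparse hexp (by linarith) x hm (k := k) (by linarith)
  have hdist : H.dist u w ≤ 2 * (t + 1 + k) := by
    refine hH.dist_le_of_card_lt_ncard_add_ncard ?_
    have := hball u
    have := hball w
    exact_mod_cast (by linarith : (Nat.card V : ℝ) <
      (H.closedBall u (t + 1 + k)).ncard + (H.closedBall w (t + 1 + k)).ncard)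
  calc (H.dist u w : ℝ) ≤ 2 * ((t + 1 + k : ℕ) : ℝ) := by exact_mod_cast hdist
    _ ≤ 2 * (K + 1 / Real.log b) * Real.log n := by linarith

/-- Deterministic diameter bound: a connected `n`-vertex graph `H` with at most `(1+ε)·n`
edges, in which every set spans at most `3|S|` edges and every connected set of size
between `K·log n` and `3n/4` has edge boundary at least `δ|S|`, has diameter at most
`2·(K + 1/log(1 + δ/3))·log n`. -/
theorem diameter_from_edge_expansion (ε δ K : ℝ) (hε0 : 0 < ε) (hε : ε ≤ 1 / 3)
    (hδ : 0 < δ) (hK : 1 ≤ K) : ∃ n₀ : ℕ, ∀ n : ℕ, n₀ ≤ n →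
      ∀ {V : Type} [Fintype V], Fintype.card V = n →
        ∀ H : SimpleGraph V, H.Connected →
          ((H.edgeSet.ncard : ℝ) ≤ (1 + ε) * n) →
          (∀ S : Set V, (eIn H S : ℝ) ≤ 3 * S.ncard) →
          (∀ S : Set V, (H.induce S).Connected →
            K * Real.log n ≤ (S.ncard : ℝ) → (S.ncard : ℝ) ≤ 3 * n / 4 →
            δ * S.ncard ≤ ((edgeBdry H S).ncard : ℝ)) →
          ∀ u w : V, (H.dist u w : ℝ) ≤
            2 * (K + 1 / Real.log (1 + δ / 3)) * Real.log n :=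
  diameter_from_edge_expansion_general ε δ K hδ hK
end

section
/- Let H be a graph whose vertex set is partitioned into nonempty disjoint sets V₁,…,V_t, each inducing a connected subgraph of H. Let A be the auxiliary graph on vertex set {1,…,t} in which distinct i and j are adjacent if and only if H contains an edge with one endpoint in V_i and the other in V_j. If A contains a path with L edges, then H contains a path with at least L edges. -/
open Function

namespace SimpleGraph

variable {V ι : Type*} {G : SimpleGraph V}

lemma Walk.IsPath.append_cons {u v w x : V} {p : G.Walk u v} {q : G.Walk w x}
    (hp : p.IsPath) (hq : q.IsPath) (h : G.Adj v w) (hpq : p.support.Disjoint q.support) :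
    (p.append (cons h q)).IsPath := by
  rw [Walk.isPath_def, Walk.support_append, Walk.support_cons, List.tail_cons]
  exact List.nodup_append'.2 ⟨hp.support_nodup, hq.support_nodup, hpq⟩

lemma Preconnected.exists_isPath_of_induce {s : Set V} (hs : (G.induce s).Preconnected)
    {u v : V} (hu : u ∈ s) (hv : v ∈ s) :
    ∃ p : G.Walk u v, p.IsPath ∧ ∀ x ∈ p.support, x ∈ s := by
  classical
  obtain ⟨r⟩ := hs ⟨u, hu⟩ ⟨v, hv⟩
  let f : G.induce s →g G := (Embedding.induce s).toHom
  have hsupp : ∀ x ∈ (r.toPath.1.map f).support, x ∈ s := by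
    simp only [Walk.support_map, List.mem_map]
    rintro _ ⟨y, -, rfl⟩
    exact y.2
  exact ⟨r.toPath.1.map f, r.toPath.2.map Subtype.val_injective, hsupp⟩

/-- Each blob `P i` on the path `p` in `A` is crossed by a subpath inside `P i`
followed by an edge into the next blob; since the blobs of a path are distinct and the blobs are
disjoint, these pieces never meet. -/
lemma Walk.IsPath.exists_isPath_through_blobs {A : SimpleGraph ι} {P : ι → Set V}
    (hdisj : Pairwise (Disjoint on P)) (hconn : ∀ i, (G.induce (P i)).Preconnected)
    (hA : ∀ i j, A.Adj i j → ∃ u ∈ P i, ∃ w ∈ P j, G.Adj u w) :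
    ∀ {i j : ι} {p : A.Walk i j}, p.IsPath → ∀ {u : V}, u ∈ P i →
      ∃ w ∈ P j, ∃ q : G.Walk u w, q.IsPath ∧ p.length ≤ q.length ∧
        ∀ x ∈ q.support, ∃ k ∈ p.support, x ∈ P k
  | _, _, .nil, _, u, hu => ⟨u, hu, .nil, .nil, le_rfl, by simpa using hu⟩
  | i, _, .cons (v := i') hii' p, hp, u, hu => by
    rw [Walk.cons_isPath_iff] at hp
    obtain ⟨u', hu', w', hw', hu'w'⟩ := hA i i' hii'
    obtain ⟨q₁, hq₁, hq₁P⟩ := (hconn i).exists_isPath_of_induce hu hu'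
    obtain ⟨w, hw, q₂, hq₂, hlen, hq₂P⟩ := hp.1.exists_isPath_through_blobs hdisj hconn hA hw'
    have hq₂_avoid : ∀ x ∈ q₂.support, x ∉ P i := by
      intro x hx hxi
      obtain ⟨k, hk, hxk⟩ := hq₂P x hx
      exact hdisj (ne_of_mem_of_not_mem hk hp.2).symm |>.ne_of_mem hxi hxk rfl
    refine ⟨w, hw, q₁.append (.cons hu'w' q₂),
      hq₁.append_cons hq₂ hu'w' fun x hx₁ hx₂ => hq₂_avoid x hx₂ (hq₁P x hx₁), ?_, ?_⟩
    · simp only [Walk.length_append, Walk.length_cons]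
      omega
    · intro x hx
      simp only [Walk.mem_support_append_iff, Walk.support_cons, List.mem_cons] at hx
      rcases hx with hx | rfl | hx
      · exact ⟨i, p.support.mem_cons_self, hq₁P x hx⟩
      · exact ⟨i, p.support.mem_cons_self, hu'⟩
      · obtain ⟨k, hk, hxk⟩ := hq₂P x hx
        exact ⟨k, List.mem_cons_of_mem _ hk, hxk⟩

end SimpleGraph

theorem path_lift_from_blob_path_general {V : Type*} (H : SimpleGraph V) (t : ℕ)
    (P : Fin t → Set V)
    (hdisj : ∀ i j, i ≠ j → Disjoint (P i) (P j))
    (hconn : ∀ i, (H.induce (P i)).Connected)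
    (A : SimpleGraph (Fin t))
    (hA : ∀ i j, A.Adj i j ↔ i ≠ j ∧ ∃ u ∈ P i, ∃ w ∈ P j, H.Adj u w)
    (L : ℕ) (hpath : ∃ (i j : Fin t) (p : A.Walk i j), p.IsPath ∧ p.length = L) :
    ∃ (u w : V) (q : H.Walk u w), q.IsPath ∧ L ≤ q.length := by
  obtain ⟨i, j, p, hp, rfl⟩ := hpath
  obtain ⟨⟨u, hu⟩⟩ := (hconn i).nonempty
  obtain ⟨w, -, q, hq, hlen, -⟩ := hp.exists_isPath_through_blobs (fun i j hij => hdisj i j hij)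
    (fun i => (hconn i).preconnected) (fun i j hij => ((hA i j).1 hij).2) hu
  exact ⟨u, w, q, hq, hlen⟩

/-- Lifting a path of blobs to a path of vertices: if the vertex set of `H` is partitioned
into nonempty connected blobs `V₁, …, V_t`, and the auxiliary graph `A` on `{1,…,t}`
(where `i ∼ j` iff `H` has an edge between `V_i` and `V_j`) contains a path with `L`
edges, then `H` contains a path with at least `L` edges. -/
theorem path_lift_from_blob_path {V : Type*} (H : SimpleGraph V) (t : ℕ)
    (P : Fin t → Set V)
    (hne : ∀ i, (P i).Nonempty)
    (hdisj : ∀ i j, i ≠ j → Disjoint (P i) (P j))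
    (hcover : (⋃ i, P i) = Set.univ)
    (hconn : ∀ i, (H.induce (P i)).Connected)
    (A : SimpleGraph (Fin t))
    (hA : ∀ i j, A.Adj i j ↔ i ≠ j ∧ ∃ u ∈ P i, ∃ w ∈ P j, H.Adj u w)
    (L : ℕ) (hpath : ∃ (i j : Fin t) (p : A.Walk i j), p.IsPath ∧ p.length = L) :
    ∃ (u w : V) (q : H.Walk u w), q.IsPath ∧ L ≤ q.length :=
  path_lift_from_blob_path_general H t P hdisj hconn A hA L hpath
end
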